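/- arXiv:1803.06876 — 13 statements merged into one kernel-verified Lean document; each statement's English description precedes it below -/
import Mathlib

section
/- Let P be a poset, 𝓜 a minimal subset selection on P, and A ∈ 𝓜⁺ (an 𝓜-set with a supremum in P). Define I_A = {(u, ub(B)) : B a nonempty finite subset of A and u ∈ ub(B)}, preordered by (u₁, ub(B₁)) ≤ (u₂, ub(B₂)) iff ub(B₁) ⊇ ub(B₂), and define the net x : I_A → P by x_{(u, ub(B))} = u. Then I_A is a nonempty directed preordered set and the net (x_i)_{i ∈ I_A} 𝓜-converges to sup A. -/
universe u

/-- A directed preordered index for a net: `r` is reflexive, transitive,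
the index type is nonempty, and `r` is directed. -/
structure IsDirNet {I : Type u} (r : I → I → Prop) : Prop where
  refl : ∀ i, r i i
  trans : ∀ {i j k : I}, r i j → r j k → r i k
  nonempty : Nonempty I
  directed : ∀ i j, ∃ k, r i k ∧ r j k

/-- A minimal subset selection on a poset `P`. -/
def MinSel {P : Type u} [PartialOrder P] (M : Set (Set P)) : Prop :=
  (∅ : Set P) ∉ M ∧ ∀ x : P, {x} ∈ M

/-- The net `f : I → P` (indexed by `(I, r)`) `𝓜`-converges to `x`. -/
def MConv {P : Type u} [PartialOrder P] (M : Set (Set P))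
    {I : Type u} (r : I → I → Prop) (f : I → P) (x : P) : Prop :=
  ∃ A : Set P, ∃ s : P, A ∈ M ∧ IsLUB A s ∧ x ≤ s ∧
    ∀ a ∈ A, ∃ i₀, ∀ i, r i₀ i → a ≤ f i

/-- The topology `τ_𝓜` induced by `𝓜`-convergence, as a collection of open sets. -/
def mTop {P : Type u} [PartialOrder P] (M : Set (Set P)) : Set (Set P) :=
  {U | ∀ (I : Type u) (r : I → I → Prop) (f : I → P) (x : P),
      IsDirNet r → MConv M r f x → x ∈ U → ∃ i₀, ∀ i, r i₀ i → f i ∈ U}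

/-- The `𝓜`-convergence structure is topological: every net converging to `x` with
respect to `τ_𝓜` also `𝓜`-converges to `x`. -/
def MTopological {P : Type u} [PartialOrder P] (M : Set (Set P)) : Prop :=
  ∀ (I : Type u) (r : I → I → Prop) (f : I → P) (x : P), IsDirNet r →
    (∀ U ∈ mTop M, x ∈ U → ∃ i₀, ∀ i, r i₀ i → f i ∈ U) →
    MConv M r f x

/-- The `𝓜`-way-below relation `x ≪_𝓜 y`. -/
def wayBelowM {P : Type u} [PartialOrder P] (M : Set (Set P)) (x y : P) : Prop :=
  ∀ (A : Set P) (s : P), A ∈ M → IsLUB A s → y ≤ s →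
    ∃ B : Set P, B.Nonempty ∧ B.Finite ∧ B ⊆ A ∧ upperBounds B ⊆ Set.Ici x

/-- `𝓜`-continuity of the poset `P`. -/
def MCont {P : Type u} [PartialOrder P] (M : Set (Set P)) : Prop :=
  ∀ x : P,
    (∃ A : Set P, ∃ s : P, A ∈ M ∧ IsLUB A s ∧ A ⊆ {y | wayBelowM M y x} ∧ x ≤ s) ∧
    {y | wayBelowM M x y} ∈ mTop M

/-- From an 𝓜-set with supremum, the canonical net on `I_A` 𝓜-converges to `sup A`. -/
theorem stmt_0 {P : Type u} [PartialOrder P] (M : Set (Set P)) (hM : MinSel M)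
    (A : Set P) (hA : A ∈ M) (s : P) (hs : IsLUB A s) :
    let IA := {p : P × Set P //
      ∃ B : Set P, B.Nonempty ∧ B.Finite ∧ B ⊆ A ∧ p.2 = upperBounds B ∧ p.1 ∈ p.2}
    let r : IA → IA → Prop := fun p q => q.1.2 ⊆ p.1.2
    let f : IA → P := fun p => p.1.1
    IsDirNet r ∧ MConv M r f s := by
  intro IA r f
  have hAne : A.Nonempty := by
    rcases Set.eq_empty_or_nonempty A with h | h
    · exact absurd (h ▸ hA) hM.1
    · exact h
  obtain ⟨a0, ha0⟩ := hAne
  have hsub : ∀ B : Set P, B ⊆ A → s ∈ upperBounds B := fun B hB x hx => hs.1 (hB hx)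
  constructor
  · refine ⟨fun i => le_refl _, fun h1 h2 => h2.trans h1, ?_, ?_⟩
    · exact ⟨⟨(a0, upperBounds {a0}), {a0}, Set.singleton_nonempty a0,
        Set.finite_singleton a0, Set.singleton_subset_iff.2 ha0, rfl,
        fun x hx => le_of_eq hx⟩⟩
    · rintro ⟨⟨u1, S1⟩, B1, hB1ne, hB1f, hB1A, hS1, hu1⟩ ⟨⟨u2, S2⟩, B2, hB2ne, hB2f, hB2A, hS2, hu2⟩
      refine ⟨⟨(s, upperBounds (B1 ∪ B2)), B1 ∪ B2, hB1ne.mono Set.subset_union_left,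
        hB1f.union hB2f, Set.union_subset hB1A hB2A, rfl,
        hsub _ (Set.union_subset hB1A hB2A)⟩, ?_, ?_⟩
      · show upperBounds (B1 ∪ B2) ⊆ S1
        have h1 : S1 = upperBounds B1 := hS1
        rw [h1]; exact upperBounds_mono_set Set.subset_union_left
      · show upperBounds (B1 ∪ B2) ⊆ S2
        have h2 : S2 = upperBounds B2 := hS2
        rw [h2]; exact upperBounds_mono_set Set.subset_union_right
  · refine ⟨A, s, hA, hs, le_refl s, fun a ha => ?_⟩
    refine ⟨⟨(s, upperBounds {a}), {a}, Set.singleton_nonempty a, Set.finite_singleton a,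
      Set.singleton_subset_iff.2 ha, rfl, hsub _ (Set.singleton_subset_iff.2 ha)⟩, ?_⟩
    rintro ⟨⟨u, S⟩, B, hBne, hBf, hBA, hS, hu⟩ hi
    exact hi hu rfl
end

section
/- Let P be a poset, 𝓜 a minimal subset selection on P, and τ_𝓜 the topology induced by the 𝓜-convergence structure in P. Then a subset V ⊆ P belongs to τ_𝓜 if and only if both of the following hold: (TM1) V is an upper set; and (TM2) for each A ∈ 𝓜⁺, if sup A ∈ V then there exists a nonempty finite subset B of A such that ub(B) ⊆ V. -/
universe u

/-! A net that `𝓜`-converges to `sup A` while avoiding `V` is built from the failure of (TM2):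
index it by the nonempty finite `B ⊆ A`, ordered by inclusion, and send `B` to a point of
`ub(B) \ V`. Conversely, (TM2) yields a finite `B ⊆ A` of eventual lower bounds of the net; by
directedness they are eventually lower bounds simultaneously, so the net is eventually in
`ub(B) ⊆ V`. -/

theorem IsDirNet.exists_forall_of_finite {I : Type u} {r : I → I → Prop} (h : IsDirNet r)
    {α : Type*} {B : Set α} (hB : B.Finite) {p : α → I → Prop}
    (H : ∀ b ∈ B, ∃ i, ∀ j, r i j → p b j) :
    ∃ i, ∀ j, r i j → ∀ b ∈ B, p b j := by
  induction B, hB using Set.Finite.induction_on with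
  | empty =>
    obtain ⟨i⟩ := h.nonempty
    exact ⟨i, fun _ _ _ hb => hb.elim⟩
  | @insert a B _ _ ih =>
    obtain ⟨i₁, hi₁⟩ := H a (Set.mem_insert _ _)
    obtain ⟨i₂, hi₂⟩ := ih fun b hb => H b (Set.mem_insert_of_mem _ hb)
    obtain ⟨k, hk₁, hk₂⟩ := h.directed i₁ i₂
    refine ⟨k, fun j hj b hb => ?_⟩
    rcases hb with rfl | hb
    · exact hi₁ j (h.trans hk₁ hj)
    · exact hi₂ j (h.trans hk₂ hj) b hb

theorem isDirNet_punit : IsDirNet fun _ _ : PUnit.{u+1} => True :=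
  ⟨fun _ => trivial, fun _ _ => trivial, ⟨PUnit.unit⟩, fun _ _ => ⟨PUnit.unit, trivial, trivial⟩⟩

theorem isDirNet_subset_nonempty_finite {α : Type u} {A : Set α} (hA : A.Nonempty) :
    IsDirNet fun B C : {B : Set α // B.Nonempty ∧ B.Finite ∧ B ⊆ A} => B.1 ⊆ C.1 := by
  obtain ⟨a, ha⟩ := hA
  refine ⟨fun _ => subset_rfl, fun h₁ h₂ => h₁.trans h₂,
    ⟨⟨{a}, Set.singleton_nonempty a, Set.finite_singleton a, Set.singleton_subset_iff.2 ha⟩⟩,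
    fun B C => ⟨⟨B.1 ∪ C.1, B.2.1.mono Set.subset_union_left, B.2.2.1.union C.2.2.1,
      Set.union_subset B.2.2.2 C.2.2.2⟩, Set.subset_union_left, Set.subset_union_right⟩⟩

section

variable {P : Type u} [PartialOrder P] {M : Set (Set P)} {V : Set P}

theorem isUpperSet_of_mem_mTop (hM : ∀ x : P, {x} ∈ M) (hV : V ∈ mTop M) : IsUpperSet V := by
  intro x y hxy hx
  have hconv : MConv M (fun _ _ : PUnit.{u+1} => True) (fun _ => y) x :=
    ⟨{x}, x, hM x, isLUB_singleton, le_rfl, fun a ha => ⟨PUnit.unit, fun _ _ => ha ▸ hxy⟩⟩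
  obtain ⟨i₀, hi₀⟩ := hV PUnit _ _ x isDirNet_punit hconv hx
  exact hi₀ i₀ trivial

theorem exists_finite_upperBounds_subset_of_mem_mTop (hM : (∅ : Set P) ∉ M) (hV : V ∈ mTop M)
    {A : Set P} {s : P} (hA : A ∈ M) (hs : IsLUB A s) (hsV : s ∈ V) :
    ∃ B : Set P, B.Nonempty ∧ B.Finite ∧ B ⊆ A ∧ upperBounds B ⊆ V := by
  by_contra! hcon
  have hAne : A.Nonempty := Set.nonempty_iff_ne_empty.2 fun h => hM (h ▸ hA)
  choose z hz hzV using fun (B : {B : Set P // B.Nonempty ∧ B.Finite ∧ B ⊆ A}) =>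
    Set.not_subset.1 (hcon B.1 B.2.1 B.2.2.1 B.2.2.2)
  have hdir := isDirNet_subset_nonempty_finite hAne
  have hconv : MConv M (fun B C : {B : Set P // B.Nonempty ∧ B.Finite ∧ B ⊆ A} => B.1 ⊆ C.1)
      z s :=
    ⟨A, s, hA, hs, le_rfl, fun a ha => ⟨⟨{a}, Set.singleton_nonempty a,
      Set.finite_singleton a, Set.singleton_subset_iff.2 ha⟩, fun B hB => hz B (hB rfl)⟩⟩
  obtain ⟨B₀, hB₀⟩ := hV _ _ z s hdir hconv hsV
  exact hzV B₀ (hB₀ B₀ (hdir.refl B₀))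

theorem mem_mTop_of_isUpperSet (hup : IsUpperSet V)
    (hfin : ∀ (A : Set P) (s : P), A ∈ M → IsLUB A s → s ∈ V →
      ∃ B : Set P, B.Nonempty ∧ B.Finite ∧ B ⊆ A ∧ upperBounds B ⊆ V) :
    V ∈ mTop M := by
  intro I r f x hdir ⟨A, s, hA, hs, hxs, hev⟩ hx
  obtain ⟨B, -, hBfin, hBA, hBV⟩ := hfin A s hA hs (hup hxs hx)
  obtain ⟨i₀, hi₀⟩ := hdir.exists_forall_of_finite hBfin fun b hb => hev b (hBA hb)
  exact ⟨i₀, fun i hi => hBV fun b hb => hi₀ i hi b hb⟩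

end

/-- Order-theoretic characterisation of the opens of `τ_𝓜`. -/
theorem stmt_1 {P : Type u} [PartialOrder P] (M : Set (Set P)) (hM : MinSel M)
    (V : Set P) :
    V ∈ mTop M ↔
      (IsUpperSet V ∧
        ∀ (A : Set P) (s : P), A ∈ M → IsLUB A s → s ∈ V →
          ∃ B : Set P, B.Nonempty ∧ B.Finite ∧ B ⊆ A ∧ upperBounds B ⊆ V) :=
  ⟨fun hV => ⟨isUpperSet_of_mem_mTop hM.2 hV,
      fun _ _ hA hs hsV => exists_finite_upperBounds_subset_of_mem_mTop hM.1 hV hA hs hsV⟩,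
    fun ⟨hup, hfin⟩ => mem_mTop_of_isUpperSet hup hfin⟩
end

section
/- Let P be a poset, 𝓜 a minimal subset selection on P, and x, y ∈ P. Then x ≪_𝓜 y if and only if for every net (x_i)_{i∈I} in P, if (x_i) 𝓜-converges to y then x_i ∈ ↑x eventually. -/
universe u

/-- Net characterisation of the 𝓜-way-below relation. -/
theorem stmt_2 {P : Type u} [PartialOrder P] (M : Set (Set P)) (hM : MinSel M)
    (x y : P) :
    wayBelowM M x y ↔
      ∀ (I : Type u) (r : I → I → Prop) (f : I → P), IsDirNet r →
        MConv M r f y → ∃ i₀, ∀ i, r i₀ i → x ≤ f i := by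
  constructor
  · intro hwb I r f hdir hconv
    obtain ⟨A, s, hAM, hlub, hys, hev⟩ := hconv
    obtain ⟨B, hBne, hBfin, hBA, hub⟩ := hwb A s hAM hlub hys
    classical
    have key : ∀ C : Finset P, ↑C ⊆ A →
        ∃ i₀, ∀ i, r i₀ i → ∀ b ∈ C, b ≤ f i := by
      intro C
      induction C using Finset.induction_on with
      | empty =>
        intro _
        obtain ⟨i⟩ := hdir.nonempty
        exact ⟨i, fun i _ b hb => absurd hb (Finset.notMem_empty b)⟩
      | @insert b C hbC ih =>
        intro hCA
        have hsub : ↑C ⊆ A := by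
          intro z hz
          exact hCA (by simpa using Or.inr hz)
        obtain ⟨i₁, hi₁⟩ := ih hsub
        obtain ⟨i₂, hi₂⟩ := hev b (hCA (by simp))
        obtain ⟨k, hk₁, hk₂⟩ := hdir.directed i₁ i₂
        refine ⟨k, fun i hi c hc => ?_⟩
        rcases Finset.mem_insert.mp hc with rfl | hc
        · exact hi₂ i (hdir.trans hk₂ hi)
        · exact hi₁ i (hdir.trans hk₁ hi) c hc
    obtain ⟨i₀, hi₀⟩ := key hBfin.toFinset (by rw [Set.Finite.coe_toFinset]; exact hBA)
    refine ⟨i₀, fun i hi => hub (fun b hb => ?_)⟩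
    exact hi₀ i hi b (hBfin.mem_toFinset.mpr hb)
  · intro h A s hAM hlub hys
    by_contra hno
    push_neg at hno
    have hno' : ∀ C : Set P, C.Nonempty → C.Finite → C ⊆ A →
        ∃ p, p ∈ upperBounds C ∧ ¬ x ≤ p := by
      intro C h1 h2 h3
      obtain ⟨p, hp1, hp2⟩ := Set.not_subset.mp (hno C h1 h2 h3)
      exact ⟨p, hp1, hp2⟩
    have hAne : A.Nonempty := by
      rcases Set.eq_empty_or_nonempty A with rfl | hne
      · exact absurd hAM hM.1
      · exact hne
    let I : Type u := {q : Set P × P // q.1.Nonempty ∧ q.1.Finite ∧ q.1 ⊆ A ∧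
      q.2 ∈ upperBounds q.1 ∧ ¬ x ≤ q.2}
    let r : I → I → Prop := fun i j => i.1.1 ⊆ j.1.1
    let f : I → P := fun i => i.1.2
    have hInh : Nonempty I := by
      obtain ⟨a, ha⟩ := hAne
      obtain ⟨p, hp1, hp2⟩ := hno' {a} ⟨a, rfl⟩ (Set.finite_singleton a)
        (Set.singleton_subset_iff.mpr ha)
      exact ⟨⟨({a}, p), ⟨a, rfl⟩, Set.finite_singleton a,
        Set.singleton_subset_iff.mpr ha, hp1, hp2⟩⟩
    have hdir : IsDirNet r := by
      refine ⟨fun i => subset_rfl, fun hij hjk => hij.trans hjk, hInh, ?_⟩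
      intro i j
      obtain ⟨p, hp1, hp2⟩ := hno' (i.1.1 ∪ j.1.1) (i.2.1.mono Set.subset_union_left)
        (i.2.2.1.union j.2.2.1) (Set.union_subset i.2.2.2.1 j.2.2.2.1)
      exact ⟨⟨(i.1.1 ∪ j.1.1, p), i.2.1.mono Set.subset_union_left,
        i.2.2.1.union j.2.2.1, Set.union_subset i.2.2.2.1 j.2.2.2.1, hp1, hp2⟩,
        Set.subset_union_left, Set.subset_union_right⟩
    have hconv : MConv M r f y := by
      refine ⟨A, s, hAM, hlub, hys, fun a ha => ?_⟩
      obtain ⟨p, hp1, hp2⟩ := hno' {a} ⟨a, rfl⟩ (Set.finite_singleton a)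
        (Set.singleton_subset_iff.mpr ha)
      refine ⟨⟨({a}, p), ⟨a, rfl⟩, Set.finite_singleton a,
        Set.singleton_subset_iff.mpr ha, hp1, hp2⟩, fun i hi => ?_⟩
      exact i.2.2.2.2.1 (hi rfl)
    obtain ⟨i₀, hi₀⟩ := h I r f hdir hconv
    exact i₀.2.2.2.2.2 (hi₀ i₀ subset_rfl)
end

section
/- Let P be a poset and 𝓜 a minimal subset selection on P. If P is 𝓜-continuous, then the 𝓜-convergence structure in P is topological; that is, every net that converges to a point x in the topology τ_𝓜 also 𝓜-converges to x. -/
universe u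

/-- If `P` is 𝓜-continuous, then the 𝓜-convergence structure in `P` is topological. -/
theorem stmt_3 {P : Type u} [PartialOrder P] (M : Set (Set P)) (hM : MinSel M)
    (hcont : MCont M) : MTopological M := by
  intro I r f x hdir hconv
  obtain ⟨⟨A, s, hAM, hlub, hsub, hxs⟩, -⟩ := hcont x
  refine ⟨A, s, hAM, hlub, hxs, ?_⟩
  intro a ha
  have haw : wayBelowM M a x := hsub ha
  obtain ⟨i₀, hi₀⟩ := hconv _ (hcont a).2 haw
  refine ⟨i₀, fun i hi => ?_⟩
  have hw : wayBelowM M a (f i) := hi₀ i hi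
  obtain ⟨B, hBne, -, hBsub, hub⟩ := hw {f i} (f i) (hM.2 (f i)) isLUB_singleton le_rfl
  exact hub (fun b hb => by rcases hBsub hb with rfl; exact le_rfl)
end

section
/- Let P be a poset and 𝓜 a minimal subset selection on P. Suppose the 𝓜-convergence structure in P satisfies the Iterated Limits axiom: whenever a net (x_i)_{i∈I} 𝓜-converges to x and, for each i ∈ I, a net (x_{i,j})_{j∈J(i)} 𝓜-converges to x_i, the net (i, f) ↦ x_{i, f(i)}, indexed by K := I × Π_{i∈I} J(i) with the pointwise (product) order, 𝓜-converges to x. Then P is 𝓜-continuous. -/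
universe u

/-! For an `𝓜`-set `A` with supremum `s`, the pairs `(F, u)` with `F ⊆ A` finite nonempty and
`u ∈ ub F`, directed by inclusion of `F` and valued at `u`, form a net `𝓜`-converging to every
point below `s`; the Iterated Limits axiom is applied to families of such nets.

(M1): iterate, over all `𝓜⁺`-sets `A` with `x ≤ sup A`, the constant net at `x`. The limit
provides an `𝓜⁺`-set `B` with `x ≤ sup B` whose members `b` are eventual lower bounds of the
iterated net. Moving only the `A`-coordinate to `(F, u)` for an arbitrary `u ∈ ub F` keeps us
beyond the eventual index, so `ub F ⊆ ↑b`, i.e. `b ≪ x`.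

(M2): if a net converging to `z` with `x ≪ z` is frequently outside `⇑x`, pass to a cofinal subnet
of such points; each witness of `¬ x ≪ f i` is an `𝓜`-set whose finite subsets all have upper
bounds `u` with `x ≰ u`, so the iterated net can be built from those `u` only. It converges to `z`,
hence by `x ≪ z` it is eventually above `x`: a contradiction. -/

namespace IsDirNet

variable {I : Type u} {r : I → I → Prop}

theorem of_true [Nonempty I] : IsDirNet (fun _ _ : I => True) :=
  ⟨fun _ => trivial, fun _ _ => trivial, ‹_›, fun i _ => ⟨i, trivial, trivial⟩⟩

theorem iterated (hr : IsDirNet r) {J : I → Type u} {rJ : ∀ i, J i → J i → Prop}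
    (hJ : ∀ i, IsDirNet (rJ i)) :
    IsDirNet (fun (p q : I × (∀ i, J i)) => r p.1 q.1 ∧ ∀ i, rJ i (p.2 i) (q.2 i)) := by
  refine ⟨fun p => ⟨hr.refl p.1, fun i => (hJ i).refl (p.2 i)⟩,
    fun hpq hqk => ⟨hr.trans hpq.1 hqk.1, fun i => (hJ i).trans (hpq.2 i) (hqk.2 i)⟩,
    ?_, fun p q => ?_⟩
  · obtain ⟨i⟩ := hr.nonempty
    exact ⟨(i, fun j => Classical.choice (hJ j).nonempty)⟩
  · obtain ⟨k, hpk, hqk⟩ := hr.directed p.1 q.1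
    choose l hpl hql using fun i => (hJ i).directed (p.2 i) (q.2 i)
    exact ⟨(k, l), ⟨hpk, hpl⟩, ⟨hqk, hql⟩⟩

theorem eventually_forall_of_finite (hr : IsDirNet r) {α : Type*} {B : Set α}
    (hB : B.Finite) {p : α → I → Prop} (h : ∀ b ∈ B, ∃ i₀, ∀ i, r i₀ i → p b i) :
    ∃ i₀, ∀ i, r i₀ i → ∀ b ∈ B, p b i := by
  classical
  have : IsTrans I r := ⟨fun _ _ _ => hr.trans⟩
  have := hr.nonempty
  choose! i₀ hi₀ using h
  obtain ⟨k, hk⟩ := Directed.finset_le (f := id) hr.directed (hB.toFinset.image i₀)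
  exact ⟨k, fun i hki b hb =>
    hi₀ b hb i (hr.trans (hk _ (Finset.mem_image_of_mem _ (hB.mem_toFinset.mpr hb))) hki)⟩

end IsDirNet

section

variable {P : Type u} [PartialOrder P] {M : Set (Set P)}

def BoundsFiniteSubsets (A : Set P) (Q : P → Prop) : Prop :=
  ∀ F : Set P, F.Finite → F.Nonempty → F ⊆ A → ∃ u ∈ upperBounds F, Q u

theorem MinSel.nonempty_of_mem (hM : MinSel M) {A : Set P} (hA : A ∈ M) : A.Nonempty :=
  Set.nonempty_iff_ne_empty.mpr fun h => hM.1 (h ▸ hA)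

theorem MinSel.mConv_const (hM : MinSel M) {I : Type u} [Nonempty I] (r : I → I → Prop)
    (x : P) : MConv M r (fun _ => x) x :=
  ⟨{x}, x, hM.2 x, isLUB_singleton, le_rfl, fun _ ha =>
    ⟨Classical.arbitrary I, fun _ _ => (Set.mem_singleton_iff.mp ha).le⟩⟩

theorem MConv.comp_of_forall_rel {I : Type u} {r : I → I → Prop} {f : I → P} {z : P}
    (hf : MConv M r f z) (hr : IsDirNet r) {h : I → I} (hh : ∀ i, r i (h i)) :
    MConv M r (f ∘ h) z := by
  obtain ⟨A, s, hA, hs, hzs, hev⟩ := hf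
  refine ⟨A, s, hA, hs, hzs, fun a ha => ?_⟩
  obtain ⟨i₀, hi₀⟩ := hev a ha
  exact ⟨i₀, fun i hi => hi₀ (h i) (hr.trans hi (hh i))⟩

theorem exists_of_not_wayBelowM {x y : P} (h : ¬ wayBelowM M x y) :
    ∃ A s, A ∈ M ∧ IsLUB A s ∧ y ≤ s ∧ BoundsFiniteSubsets A (¬ x ≤ ·) := by
  simp only [wayBelowM, not_forall, not_exists, not_and] at h
  obtain ⟨A, s, hA, hs, hys, hF⟩ := h
  refine ⟨A, s, hA, hs, hys, fun F hFfin hFne hFA => ?_⟩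
  obtain ⟨u, hu, hxu⟩ := Set.not_subset.mp (hF F hFne hFfin hFA)
  exact ⟨u, hu, hxu⟩

end

structure BoundedFinSubset {P : Type u} [PartialOrder P] (A : Set P) (Q : P → Prop) :
    Type u where
  carrier : Set P
  finite : carrier.Finite
  nonempty : carrier.Nonempty
  subset : carrier ⊆ A
  bound : P
  bound_mem : bound ∈ upperBounds carrier
  prop : Q bound

namespace BoundedFinSubset

variable {P : Type u} [PartialOrder P] {A : Set P} {Q : P → Prop}

instance : Preorder (BoundedFinSubset A Q) := Preorder.lift carrier

noncomputable def ofFinite (hQ : BoundsFiniteSubsets A Q) {F : Set P} (hFfin : F.Finite)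
    (hFne : F.Nonempty) (hFA : F ⊆ A) :
    BoundedFinSubset A Q :=
  ⟨F, hFfin, hFne, hFA, (hQ F hFfin hFne hFA).choose, (hQ F hFfin hFne hFA).choose_spec.1,
    (hQ F hFfin hFne hFA).choose_spec.2⟩

theorem isDirNet (hQ : BoundsFiniteSubsets A Q) (hA : A.Nonempty) :
    IsDirNet (I := BoundedFinSubset A Q) (· ≤ ·) := by
  refine ⟨le_refl, le_trans, ?_, fun q q' => ?_⟩
  · obtain ⟨a, ha⟩ := hA
    exact ⟨ofFinite hQ (Set.finite_singleton a) (Set.singleton_nonempty a)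
      (Set.singleton_subset_iff.mpr ha)⟩
  · exact ⟨ofFinite hQ (q.finite.union q'.finite) (q.nonempty.mono Set.subset_union_left)
      (Set.union_subset q.subset q'.subset), Set.subset_union_left, Set.subset_union_right⟩

theorem mConv (hQ : BoundsFiniteSubsets A Q) {M : Set (Set P)} (hAM : A ∈ M) {s y : P}
    (hs : IsLUB A s) (hy : y ≤ s) :
    MConv M (I := BoundedFinSubset A Q) (· ≤ ·) bound y :=
  ⟨A, s, hAM, hs, hy, fun a ha =>
    ⟨ofFinite hQ (Set.finite_singleton a) (Set.singleton_nonempty a)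
      (Set.singleton_subset_iff.mpr ha),
      fun q hq => q.bound_mem (hq (Set.mem_singleton a))⟩⟩

theorem exists_forall_le_of_eventually_le {I : Type u} {A : I → Set P} {b : P}
    (h : ∃ k₀ : I × (∀ i, BoundedFinSubset (A i) Q), ∀ k : I × (∀ i, BoundedFinSubset (A i) Q),
      (∀ i, k₀.2 i ≤ k.2 i) → b ≤ (k.2 k.1).bound) (i : I) :
    ∃ F : Set P, F.Nonempty ∧ F.Finite ∧ F ⊆ A i ∧ ∀ u ∈ upperBounds F, Q u → b ≤ u := by
  classical
  obtain ⟨k₀, hk₀⟩ := h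
  let q := k₀.2 i
  refine ⟨q.carrier, q.nonempty, q.finite, q.subset, fun u hu hQu => ?_⟩
  let k : ∀ j, BoundedFinSubset (A j) Q :=
    Function.update k₀.2 i ⟨q.carrier, q.finite, q.nonempty, q.subset, u, hu, hQu⟩
  have hk : ∀ j, k₀.2 j ≤ k j := by
    intro j
    rcases eq_or_ne j i with rfl | hj
    · simp only [k, Function.update_self]
      exact le_refl q.carrier
    · simp only [k, Function.update_of_ne hj, le_refl]
  simpa [k] using hk₀ (i, k) hk

end BoundedFinSubset

def IteratedLimits {P : Type u} [PartialOrder P] (M : Set (Set P)) : Prop :=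
  ∀ (I : Type u) (r : I → I → Prop) (f : I → P) (x : P),
    IsDirNet r → MConv M r f x →
    ∀ (J : I → Type u) (rJ : ∀ i, J i → J i → Prop) (g : ∀ i, J i → P),
      (∀ i, IsDirNet (rJ i)) → (∀ i, MConv M (rJ i) (g i) (f i)) →
      MConv M
        (fun (p q : I × (∀ i, J i)) => r p.1 q.1 ∧ ∀ i, rJ i (p.2 i) (q.2 i))
        (fun p => g p.1 (p.2 p.1)) x

section

variable {P : Type u} [PartialOrder P] {M : Set (Set P)}

theorem exists_wayBelowM_approx_of_iteratedLimits (hM : MinSel M) (hiter : IteratedLimits M)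
    (x : P) : ∃ A s, A ∈ M ∧ IsLUB A s ∧ A ⊆ {y | wayBelowM M y x} ∧ x ≤ s := by
  let I := {A : Set P // A ∈ M ∧ ∃ s, IsLUB A s ∧ x ≤ s}
  have : Nonempty I := ⟨⟨{x}, hM.2 x, x, isLUB_singleton, le_rfl⟩⟩
  have hQ (i : I) : BoundsFiniteSubsets i.1 fun _ => True := by
    obtain ⟨s, hs, -⟩ := i.2.2
    exact fun F _ _ hF => ⟨s, fun a ha => hs.1 (hF ha), trivial⟩
  obtain ⟨B, t, hBM, hBt, hxt, hev⟩ := hiter I (fun _ _ => True) (fun _ => x) x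
    IsDirNet.of_true (hM.mConv_const _ x) (fun i => BoundedFinSubset i.1 fun _ => True)
    (fun _ => (· ≤ ·)) (fun _ q => q.bound)
    (fun i => BoundedFinSubset.isDirNet (hQ i) (hM.nonempty_of_mem i.2.1))
    (fun i => by
      obtain ⟨s, hs, hxs⟩ := i.2.2
      exact BoundedFinSubset.mConv (hQ i) i.2.1 hs hxs)
  refine ⟨B, t, hBM, hBt, fun b hb A s hA hs hxs => ?_, hxt⟩
  obtain ⟨k₀, hk₀⟩ := hev b hb
  obtain ⟨F, hFne, hFfin, hFA, hbF⟩ := BoundedFinSubset.exists_forall_le_of_eventually_le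
    ⟨k₀, fun k hk => hk₀ k ⟨trivial, hk⟩⟩ ⟨A, hA, s, hs, hxs⟩
  exact ⟨F, hFne, hFfin, hFA, fun u hu => hbF u hu trivial⟩

theorem wayBelowM_mem_mTop_of_iteratedLimits (hM : MinSel M) (hiter : IteratedLimits M)
    (x : P) : {y | wayBelowM M x y} ∈ mTop M := by
  intro I r f z hr hf hz
  by_contra hfreq
  push Not at hfreq
  choose h hrh hh using hfreq
  choose A s hAM hAs hfs hQ using fun i => exists_of_not_wayBelowM (hh i)
  have hJ (i : I) := BoundedFinSubset.isDirNet (hQ i) (hM.nonempty_of_mem (hAM i))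
  obtain ⟨C, t, hCM, hCt, hzt, hev⟩ := hiter I r (f ∘ h) z hr (hf.comp_of_forall_rel hr hrh)
    (fun i => BoundedFinSubset (A i) fun u => ¬ x ≤ u) (fun _ => (· ≤ ·)) (fun _ q => q.bound)
    hJ (fun i => BoundedFinSubset.mConv (hQ i) (hAM i) (hAs i) (hfs i))
  obtain ⟨B, -, hBfin, hBC, hBx⟩ := hz C t hCM hCt hzt
  obtain ⟨k, hk⟩ :=
    (hr.iterated hJ).eventually_forall_of_finite hBfin fun b hb => hev b (hBC hb)
  exact (k.2 k.1).prop (hBx fun b hb => hk k ((hr.iterated hJ).refl k) b hb)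

end

/-- If the 𝓜-convergence structure satisfies the Iterated Limits axiom,
then `P` is 𝓜-continuous. -/
theorem stmt_4 {P : Type u} [PartialOrder P] (M : Set (Set P)) (hM : MinSel M)
    (hiter : ∀ (I : Type u) (r : I → I → Prop) (f : I → P) (x : P),
      IsDirNet r → MConv M r f x →
      ∀ (J : I → Type u) (rJ : ∀ i, J i → J i → Prop) (g : ∀ i, J i → P),
        (∀ i, IsDirNet (rJ i)) → (∀ i, MConv M (rJ i) (g i) (f i)) →
        MConv M
          (fun (p q : I × (∀ i, J i)) => r p.1 q.1 ∧ ∀ i, rJ i (p.2 i) (q.2 i))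
          (fun p => g p.1 (p.2 p.1)) x) :
    MCont M :=
  fun x => ⟨exists_wayBelowM_approx_of_iteratedLimits hM hiter x,
    wayBelowM_mem_mTop_of_iteratedLimits hM hiter x⟩
end

section
/- Let P be a poset. The Scott-convergence structure in P is topological (i.e., every net converging to a point x in the topology induced by Scott-convergence also Scott-converges to x) if and only if P is a continuous poset, meaning that for every x ∈ P the set {y : y ≪ x} is directed and has supremum x, where y ≪ x means: for every directed subset D of P having a supremum, x ≤ sup D implies y ≤ d for some d ∈ D. -/
universe u

section Aux

variable {P : Type u} [PartialOrder P]

/-- auxiliary way-below relation -/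
def WBaux (y x : P) : Prop :=
  ∀ (D : Set P) (s : P), D.Nonempty → DirectedOn (· ≤ ·) D → IsLUB D s → x ≤ s →
    ∃ d ∈ D, y ≤ d

def DirAux (P : Type u) [PartialOrder P] : Set (Set P) :=
  {D | D.Nonempty ∧ DirectedOn (· ≤ ·) D}

lemma WBaux.le {y x : P} (h : WBaux y x) : y ≤ x := by
  obtain ⟨d, hd, hyd⟩ := h {x} x ⟨x, rfl⟩
    (fun a ha b hb => ⟨x, rfl, ha.le, hb.le⟩) isLUB_singleton le_rfl
  exact hyd.trans hd.le

lemma WBaux.mono_left {y' y x : P} (h : y' ≤ y) (hw : WBaux y x) : WBaux y' x :=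
  fun D s h1 h2 h3 h4 => by
    obtain ⟨d, hd, hyd⟩ := hw D s h1 h2 h3 h4
    exact ⟨d, hd, h.trans hyd⟩

lemma WBaux.mono_right {y x x' : P} (hw : WBaux y x) (h : x ≤ x') : WBaux y x' :=
  fun D s h1 h2 h3 h4 => hw D s h1 h2 h3 (h.trans h4)

/-- Continuity hypothesis -/
def ContAux (P : Type u) [PartialOrder P] : Prop :=
  ∀ x : P, ({y | WBaux y x}).Nonempty ∧ DirectedOn (· ≤ ·) {y | WBaux y x} ∧
      IsLUB {y | WBaux y x} x

lemma interpolate (hc : ContAux P) {y x : P} (h : WBaux y x) :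
    ∃ z, WBaux y z ∧ WBaux z x := by
  set D : Set P := {w | ∃ z, WBaux w z ∧ WBaux z x} with hD
  have hne : D.Nonempty := by
    obtain ⟨z, hz⟩ := (hc x).1
    obtain ⟨w, hw⟩ := (hc z).1
    exact ⟨w, z, hw, hz⟩
  have hdir : DirectedOn (· ≤ ·) D := by
    rintro w₁ ⟨z₁, hw₁, hz₁⟩ w₂ ⟨z₂, hw₂, hz₂⟩
    obtain ⟨z₃, hz₃, h13, h23⟩ := (hc x).2.1 z₁ hz₁ z₂ hz₂
    have hw₁' : WBaux w₁ z₃ := hw₁.mono_right h13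
    have hw₂' : WBaux w₂ z₃ := hw₂.mono_right h23
    obtain ⟨v₁, hv₁, hwv₁⟩ := hw₁' _ z₃ (hc z₃).1 (hc z₃).2.1 (hc z₃).2.2 le_rfl
    obtain ⟨v₂, hv₂, hwv₂⟩ := hw₂' _ z₃ (hc z₃).1 (hc z₃).2.1 (hc z₃).2.2 le_rfl
    obtain ⟨v₃, hv₃, h1, h2⟩ := (hc z₃).2.1 v₁ hv₁ v₂ hv₂
    exact ⟨v₃, ⟨z₃, hv₃, hz₃⟩, hwv₁.trans h1, hwv₂.trans h2⟩
  have hlub : IsLUB D x := by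
    constructor
    · rintro w ⟨z, hw, hz⟩
      exact hw.le.trans hz.le
    · intro u hu
      refine (hc x).2.2.2 fun z hz => ?_
      refine (hc z).2.2.2 fun w hw => ?_
      exact hu ⟨z, hw, hz⟩
  obtain ⟨d, ⟨z, hdz, hzx⟩, hyd⟩ := h D x hne hdir hlub le_rfl
  exact ⟨z, (WBaux.mono_left hyd hdz), hzx⟩

lemma wb_open (hc : ContAux P) (y : P) : {z | WBaux y z} ∈ mTop (DirAux P) := by
  intro I r f x hdn hconv hx
  obtain ⟨A, s, ⟨hAne, hAdir⟩, hlub, hxs, hev⟩ := hconv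
  obtain ⟨w, hyw, hwx⟩ := interpolate hc hx
  obtain ⟨a, ha, hwa⟩ := hwx A s hAne hAdir hlub hxs
  obtain ⟨i₀, hi₀⟩ := hev a ha
  exact ⟨i₀, fun i hi => hyw.mono_right (hwa.trans (hi₀ i hi))⟩

lemma inter_open {U V : Set P} (M : Set (Set P)) (hU : U ∈ mTop M) (hV : V ∈ mTop M) :
    U ∩ V ∈ mTop M := by
  intro I r f x hdn hconv hx
  obtain ⟨i₁, h₁⟩ := hU I r f x hdn hconv hx.1
  obtain ⟨i₂, h₂⟩ := hV I r f x hdn hconv hx.2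
  obtain ⟨k, hk₁, hk₂⟩ := hdn.directed i₁ i₂
  exact ⟨k, fun i hi => ⟨h₁ i (hdn.trans hk₁ hi), h₂ i (hdn.trans hk₂ hi)⟩⟩

lemma univ_open (M : Set (Set P)) : (Set.univ : Set P) ∈ mTop M := by
  intro I r f x hdn _ _
  obtain ⟨i₀⟩ := hdn.nonempty
  exact ⟨i₀, fun _ _ => trivial⟩

/-- Forward: topological ⇒ continuous. First, every member of a Scott-limit witness
set is way below x. -/
lemma forward (htop : MTopological (DirAux P)) : ContAux P := by
  intro x
  -- the canonical net
  let J := {p : Set P × P // p.1 ∈ mTop (DirAux P) ∧ x ∈ p.1 ∧ p.2 ∈ p.1}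
  let r : J → J → Prop := fun p q => q.1.1 ⊆ p.1.1
  let f : J → P := fun p => p.1.2
  have hdn : IsDirNet r := by
    refine ⟨fun i => subset_rfl, fun h1 h2 => h2.trans h1, ⟨⟨(Set.univ, x), univ_open _, trivial, trivial⟩⟩,
      fun p q => ?_⟩
    refine ⟨⟨(p.1.1 ∩ q.1.1, x), inter_open _ p.2.1 q.2.1, ⟨p.2.2.1, q.2.2.1⟩, ⟨p.2.2.1, q.2.2.1⟩⟩,
      Set.inter_subset_left, Set.inter_subset_right⟩
  have hconv : ∀ U ∈ mTop (DirAux P), x ∈ U → ∃ i₀ : J, ∀ i, r i₀ i → f i ∈ U := by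
    intro U hU hxU
    exact ⟨⟨(U, x), hU, hxU, hxU⟩, fun p hp => hp p.2.2.2⟩
  obtain ⟨A, s, ⟨hAne, hAdir⟩, hlub, hxs, hev⟩ := htop J r f x hdn hconv
  -- every element of A is way below x
  have hA_wb : ∀ d ∈ A, WBaux d x := by
    intro d hd E t hEne hEdir hElub hxt
    obtain ⟨⟨⟨U, a⟩, hU, hxU, haU⟩, hmin⟩ := hev d hd
    -- d is below every element of U
    have hdU : ∀ b ∈ U, d ≤ b := fun b hb =>
      hmin ⟨(U, b), hU, hxU, hb⟩ subset_rfl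
    -- the net indexed by E converges to x
    let K := {e : P // e ∈ E}
    let rE : K → K → Prop := fun a b => a.1 ≤ b.1
    let g : K → P := Subtype.val
    have hdnE : IsDirNet rE := by
      refine ⟨fun i => le_rfl, fun h1 h2 => h1.trans h2, ⟨⟨hEne.choose, hEne.choose_spec⟩⟩,
        fun p q => ?_⟩
      obtain ⟨k, hk, h1, h2⟩ := hEdir p.1 p.2 q.1 q.2
      exact ⟨⟨k, hk⟩, h1, h2⟩
    have hconvE : MConv (DirAux P) rE g x :=
      ⟨E, t, ⟨hEne, hEdir⟩, hElub, hxt, fun e he => ⟨⟨e, he⟩, fun j hj => hj⟩⟩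
    obtain ⟨j₀, hj₀⟩ := hU K rE g x hdnE hconvE hxU
    exact ⟨j₀.1, j₀.2, hdU j₀.1 (hj₀ j₀ le_rfl)⟩
  have hsub : A ⊆ {y | WBaux y x} := hA_wb
  refine ⟨hAne.mono hsub, ?_, ?_⟩
  · intro y₁ hy₁ y₂ hy₂
    obtain ⟨d₁, hd₁, h1⟩ := hy₁ A s hAne hAdir hlub hxs
    obtain ⟨d₂, hd₂, h2⟩ := hy₂ A s hAne hAdir hlub hxs
    obtain ⟨d₃, hd₃, h13, h23⟩ := hAdir d₁ hd₁ d₂ hd₂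
    exact ⟨d₃, hA_wb d₃ hd₃, h1.trans h13, h2.trans h23⟩
  · constructor
    · exact fun y hy => hy.le
    · intro u hu
      have : s ≤ u := hlub.2 fun a ha => hu (hsub ha)
      exact hxs.trans this

lemma backward (hc : ContAux P) : MTopological (DirAux P) := by
  intro I r f x hdn hconv
  refine ⟨{y | WBaux y x}, x, ⟨(hc x).1, (hc x).2.1⟩, (hc x).2.2, le_rfl, ?_⟩
  intro a ha
  obtain ⟨i₀, hi₀⟩ := hconv {z | WBaux a z} (wb_open hc a) ha
  exact ⟨i₀, fun i hi => (hi₀ i hi).le⟩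

end Aux

/-- The Scott-convergence structure in a poset `P` is topological iff `P` is
a continuous poset. -/
theorem stmt_6 {P : Type u} [PartialOrder P] :
    let Dir : Set (Set P) := {D | D.Nonempty ∧ DirectedOn (· ≤ ·) D}
    let wb : P → P → Prop := fun y x =>
      ∀ (D : Set P) (s : P), D.Nonempty → DirectedOn (· ≤ ·) D → IsLUB D s → x ≤ s →
        ∃ d ∈ D, y ≤ d
    (MTopological Dir ↔
      ∀ x : P, ({y | wb y x}).Nonempty ∧ DirectedOn (· ≤ ·) {y | wb y x} ∧
        IsLUB {y | wb y x} x) := by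
  intro Dir wb
  exact ⟨forward, backward⟩
end

section
/- Let X be a T₀ topological space, regarded as a poset under its specialization order, and let Irr(X) be the collection of all nonempty irreducible subsets of X, which is a minimal subset selection on this poset. Then the Irr-convergence structure in X (the 𝓜-convergence structure for 𝓜 = Irr(X) on the specialization poset) is topological if and only if X is Irr-continuous, i.e., the specialization poset of X is 𝓜-continuous for 𝓜 = Irr(X). -/
universe u

/-!
`x ≪_𝓜 y` holds as soon as `↑x` is a `τ_𝓜`-neighbourhood of `y`: for `A ∈ 𝓜` with `y ≤ sup A`,
the net of upper bounds of finite subsets of `A` `𝓜`-converges to `sup A`, so it eventually lies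
in that neighbourhood. If the convergence structure is topological, the converse holds as well:
the net of points of open neighbourhoods of `y` `τ_𝓜`-converges, hence `𝓜`-converges, to `y`,
which yields `A ∈ 𝓜` with `y ≤ sup A` each of whose members is a lower bound of an open
neighbourhood of `y`. Both axioms of `𝓜`-continuity follow. Conversely, under `𝓜`-continuity the
open sets `{y | a ≪_𝓜 y}`, for `a` in the set given by (M1), turn `τ_𝓜`-convergence into
`𝓜`-convergence.
-/

open Set

section MConvergence

variable {P : Type u} [PartialOrder P] {M : Set (Set P)}

lemma univ_mem_mTop : (univ : Set P) ∈ mTop M := by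
  intro I r f x hdir _ _
  obtain ⟨i⟩ := hdir.nonempty
  exact ⟨i, fun _ _ => mem_univ _⟩

lemma inter_mem_mTop {U V : Set P} (hU : U ∈ mTop M) (hV : V ∈ mTop M) : U ∩ V ∈ mTop M := by
  intro I r f x hdir hconv hx
  obtain ⟨i₁, h₁⟩ := hU I r f x hdir hconv hx.1
  obtain ⟨i₂, h₂⟩ := hV I r f x hdir hconv hx.2
  obtain ⟨k, hk₁, hk₂⟩ := hdir.directed i₁ i₂
  exact ⟨k, fun i hi => ⟨h₁ i (hdir.trans hk₁ hi), h₂ i (hdir.trans hk₂ hi)⟩⟩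

lemma sUnion_mem_mTop {S : Set (Set P)} (hS : ∀ U ∈ S, U ∈ mTop M) : ⋃₀ S ∈ mTop M := by
  rintro I r f x hdir hconv ⟨U, hUS, hxU⟩
  obtain ⟨i₀, h⟩ := hS U hUS I r f x hdir hconv hxU
  exact ⟨i₀, fun i hi => ⟨U, hUS, h i hi⟩⟩

variable (M) in
abbrev mTopology : TopologicalSpace P where
  IsOpen U := U ∈ mTop M
  isOpen_univ := univ_mem_mTop
  isOpen_inter _ _ := inter_mem_mTop
  isOpen_sUnion _ := sUnion_mem_mTop

lemma biInter_mem_mTop {ι : Type*} {B : Set ι} (hB : B.Finite) {U : ι → Set P}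
    (hU : ∀ b ∈ B, U b ∈ mTop M) : ⋂ b ∈ B, U b ∈ mTop M :=
  @Finite.isOpen_biInter _ _ (mTopology M) _ _ hB hU

lemma isUpperSet_of_mem_mTop_s7 (hM : MinSel M) {U : Set P} (hU : U ∈ mTop M) : IsUpperSet U := by
  intro x y hxy hxU
  have hdir : IsDirNet fun _ _ : PUnit.{u + 1} => True :=
    ⟨fun _ => trivial, fun _ _ => trivial, ⟨PUnit.unit⟩, fun i _ => ⟨i, trivial, trivial⟩⟩
  obtain ⟨i₀, h⟩ := hU PUnit _ (fun _ => y) x hdir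
    ⟨{y}, y, hM.2 y, isLUB_singleton, hxy, fun a ha => ⟨PUnit.unit, fun _ _ => ha.le⟩⟩ hxU
  exact h i₀ trivial

lemma le_of_wayBelowM (hM : MinSel M) {x y : P} (h : wayBelowM M x y) : x ≤ y := by
  obtain ⟨B, -, -, hBy, hub⟩ := h {y} y (hM.2 y) isLUB_singleton le_rfl
  exact hub fun b hb => (hBy hb).le

end MConvergence

section FiniteUpperBoundNet

variable {P : Type u} [PartialOrder P]

abbrev FinUpperBound (A : Set P) : Type u :=
  {p : Set P × P // p.1.Nonempty ∧ p.1.Finite ∧ p.1 ⊆ A ∧ p.2 ∈ upperBounds p.1}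

variable {A : Set P} {s : P}

def FinUpperBound.singleton (hs : s ∈ upperBounds A) {a : P} (ha : a ∈ A) :
    FinUpperBound A :=
  ⟨({a}, s), singleton_nonempty a, finite_singleton a, singleton_subset_iff.2 ha,
    fun _ hb => hs (hb ▸ ha)⟩

lemma isDirNet_finUpperBound (hA : A.Nonempty) (hs : s ∈ upperBounds A) :
    IsDirNet fun p q : FinUpperBound A => p.1.1 ⊆ q.1.1 where
  refl _ := subset_rfl
  trans := Subset.trans
  nonempty := ⟨.singleton hs hA.some_mem⟩
  directed p q :=
    ⟨⟨(p.1.1 ∪ q.1.1, s), p.2.1.mono subset_union_left, p.2.2.1.union q.2.2.1,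
      union_subset p.2.2.2.1 q.2.2.2.1, fun _ hb => hs (union_subset p.2.2.2.1 q.2.2.2.1 hb)⟩,
      subset_union_left, subset_union_right⟩

lemma mConv_finUpperBound {M : Set (Set P)} (hA : A ∈ M) (hs : IsLUB A s) :
    MConv M (fun p q : FinUpperBound A => p.1.1 ⊆ q.1.1) (fun p => p.1.2) s :=
  ⟨A, s, hA, hs, le_rfl, fun _ ha => ⟨.singleton hs.1 ha, fun q hq => q.2.2.2.2 (hq rfl)⟩⟩

end FiniteUpperBoundNet

section NeighbourhoodNet

variable {P : Type u} [PartialOrder P] {M : Set (Set P)}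

abbrev NhdPoint (M : Set (Set P)) (y : P) : Type u :=
  {p : Set P × P // p.1 ∈ mTop M ∧ y ∈ p.1 ∧ p.2 ∈ p.1}

lemma isDirNet_nhdPoint (y : P) : IsDirNet fun p q : NhdPoint M y => q.1.1 ⊆ p.1.1 where
  refl _ := subset_rfl
  trans hpq hqr := hqr.trans hpq
  nonempty := ⟨⟨(univ, y), univ_mem_mTop, mem_univ y, mem_univ y⟩⟩
  directed p q :=
    ⟨⟨(p.1.1 ∩ q.1.1, y), inter_mem_mTop p.2.1 q.2.1, ⟨p.2.2.1, q.2.2.1⟩, ⟨p.2.2.1, q.2.2.1⟩⟩,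
      inter_subset_left, inter_subset_right⟩

lemma nhdPoint_eventually_mem (y : P) {U : Set P} (hU : U ∈ mTop M) (hyU : y ∈ U) :
    ∃ p₀ : NhdPoint M y, ∀ p : NhdPoint M y, p.1.1 ⊆ p₀.1.1 → p.1.2 ∈ U :=
  ⟨⟨(U, y), hU, hyU, hyU⟩, fun p hp => hp p.2.2.2⟩

end NeighbourhoodNet

section Continuity

variable {P : Type u} [PartialOrder P] {M : Set (Set P)}

lemma wayBelowM_of_subset_Ici (hM : MinSel M) {x y : P} {U : Set P} (hU : U ∈ mTop M)
    (hyU : y ∈ U) (hUx : U ⊆ Ici x) : wayBelowM M x y := by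
  intro A s hA hs hys
  have hAne : A.Nonempty := nonempty_iff_ne_empty.2 fun h => hM.1 (h ▸ hA)
  obtain ⟨⟨⟨B, _⟩, hBne, hBfin, hBA, _⟩, hp₀⟩ := hU _ _ _ s (isDirNet_finUpperBound hAne hs.1)
    (mConv_finUpperBound hA hs) (isUpperSet_of_mem_mTop_s7 hM hU hys hyU)
  exact ⟨B, hBne, hBfin, hBA, fun u hu => hUx (hp₀ ⟨(B, u), hBne, hBfin, hBA, hu⟩ subset_rfl)⟩

lemma exists_mConv_nhds_of_mTopological (h : MTopological M) (y : P) :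
    ∃ A s, A ∈ M ∧ IsLUB A s ∧ y ≤ s ∧ ∀ a ∈ A, ∃ U ∈ mTop M, y ∈ U ∧ U ⊆ Ici a := by
  obtain ⟨A, s, hA, hs, hys, hev⟩ :=
    h _ _ _ y (isDirNet_nhdPoint y) fun U hU hyU => nhdPoint_eventually_mem y hU hyU
  refine ⟨A, s, hA, hs, hys, fun a ha => ?_⟩
  obtain ⟨⟨⟨U, _⟩, hU, hyU, _⟩, hU_ge⟩ := hev a ha
  exact ⟨U, hU, hyU, fun z hz => hU_ge ⟨(U, z), hU, hyU, hz⟩ subset_rfl⟩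

lemma wayBelowM_iff_of_mTopological (hM : MinSel M) (h : MTopological M) {x y : P} :
    wayBelowM M x y ↔ ∃ U ∈ mTop M, y ∈ U ∧ U ⊆ Ici x := by
  refine ⟨fun hxy => ?_, fun ⟨U, hU, hyU, hUx⟩ => wayBelowM_of_subset_Ici hM hU hyU hUx⟩
  obtain ⟨A, s, hA, hs, hys, hnhds⟩ := exists_mConv_nhds_of_mTopological h y
  obtain ⟨B, -, hBfin, hBA, hub⟩ := hxy A s hA hs hys
  choose! V hV hyV hV_ge using fun b (hb : b ∈ B) => hnhds b (hBA hb)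
  refine ⟨⋂ b ∈ B, V b, biInter_mem_mTop hBfin hV, mem_iInter₂.2 hyV, fun z hz => hub ?_⟩
  exact fun b hb => hV_ge b hb (mem_iInter₂.1 hz b hb)

theorem mCont_of_mTopological (hM : MinSel M) (h : MTopological M) : MCont M := by
  intro x
  constructor
  · obtain ⟨A, s, hA, hs, hxs, hnhds⟩ := exists_mConv_nhds_of_mTopological h x
    refine ⟨A, s, hA, hs, fun a ha => ?_, hxs⟩
    obtain ⟨U, hU, hxU, hUa⟩ := hnhds a ha
    exact wayBelowM_of_subset_Ici hM hU hxU hUa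
  · refine (@isOpen_iff_forall_mem_open P (mTopology M) _).2 fun y hxy => ?_
    obtain ⟨U, hU, hyU, hUx⟩ := (wayBelowM_iff_of_mTopological hM h).1 hxy
    exact ⟨U, fun z hz => wayBelowM_of_subset_Ici hM hU hz hUx, hU, hyU⟩

theorem mTopological_of_mCont (hM : MinSel M) (h : MCont M) : MTopological M := by
  intro I r f x _ hτ
  obtain ⟨⟨A, s, hA, hs, hAx, hxs⟩, -⟩ := h x
  refine ⟨A, s, hA, hs, hxs, fun a ha => ?_⟩
  obtain ⟨i₀, hi₀⟩ := hτ _ (h a).2 (hAx ha)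
  exact ⟨i₀, fun i hi => le_of_wayBelowM hM (hi₀ i hi)⟩

theorem mTopological_iff_mCont (hM : MinSel M) : MTopological M ↔ MCont M :=
  ⟨mCont_of_mTopological hM, mTopological_of_mCont hM⟩

end Continuity

/-- For a T₀ space `X` with its specialization order, the Irr-convergence structure
is topological iff `X` is Irr-continuous. -/
theorem stmt_7 {X : Type u} [TopologicalSpace X] [T0Space X] :
    let inst : PartialOrder X := specializationOrder X
    let Irr : Set (Set X) := {A | A.Nonempty ∧
      ∀ C D : Set X, IsClosed C → IsClosed D → A ⊆ C ∪ D → A ⊆ C ∨ A ⊆ D}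
    (MTopological Irr ↔ MCont Irr) := by
  intro _ Irr
  refine mTopological_iff_mCont ⟨fun h => not_nonempty_empty h.1, fun x => ?_⟩
  exact ⟨singleton_nonempty x, fun C D _ _ hCD =>
    (hCD rfl).imp singleton_subset_iff.2 singleton_subset_iff.2⟩
end

section
/- Let P be a poset and 𝓜, 𝓝 minimal subset selections on P. A net in P can 𝓜𝓝-converge to at most one element: if a net (x_i)_{i∈I} 𝓜𝓝-converges to both x and y, then x = y. -/
universe u

/-- The net `f : I → P` `𝓜𝓝`-converges to `x`. -/
def MNConv {P : Type u} [PartialOrder P] (M N : Set (Set P))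
    {I : Type u} (r : I → I → Prop) (f : I → P) (x : P) : Prop :=
  ∃ A S : Set P, A ∈ M ∧ S ∈ N ∧ IsLUB A x ∧ IsGLB S x ∧
    ∀ a ∈ A, ∀ s ∈ S, ∃ i₀, ∀ i, r i₀ i → a ≤ f i ∧ f i ≤ s

/-- The topology `τ_𝓜𝓝` induced by `𝓜𝓝`-convergence. -/
def mnTop {P : Type u} [PartialOrder P] (M N : Set (Set P)) : Set (Set P) :=
  {U | ∀ (I : Type u) (r : I → I → Prop) (f : I → P) (x : P),
      IsDirNet r → MNConv M N r f x → x ∈ U → ∃ i₀, ∀ i, r i₀ i → f i ∈ U}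

/-- The `𝓜𝓝`-convergence structure is topological. -/
def MNTopological {P : Type u} [PartialOrder P] (M N : Set (Set P)) : Prop :=
  ∀ (I : Type u) (r : I → I → Prop) (f : I → P) (x : P), IsDirNet r →
    (∀ U ∈ mnTop M N, x ∈ U → ∃ i₀, ∀ i, r i₀ i → f i ∈ U) →
    MNConv M N r f x

/-- The relation `x ≪_𝓜𝓝 y`. -/
def wbMN {P : Type u} [PartialOrder P] (M N : Set (Set P)) (x y : P) : Prop :=
  ∀ A S : Set P, A ∈ M → S ∈ N → IsLUB A y → IsGLB S y →
    ∃ B T : Set P, B.Nonempty ∧ B.Finite ∧ B ⊆ A ∧ T.Nonempty ∧ T.Finite ∧ T ⊆ S ∧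
      upperBounds B ∩ lowerBounds T ⊆ Set.Ici x

/-- The relation `y ◁_𝓜𝓝 z`. -/
def triMN {P : Type u} [PartialOrder P] (M N : Set (Set P)) (y z : P) : Prop :=
  ∀ A S : Set P, A ∈ M → S ∈ N → IsLUB A y → IsGLB S y →
    ∃ B T : Set P, B.Nonempty ∧ B.Finite ∧ B ⊆ A ∧ T.Nonempty ∧ T.Finite ∧ T ⊆ S ∧
      upperBounds B ∩ lowerBounds T ⊆ Set.Iic z

/-- `𝓜𝓝`-continuity of the poset `P`. -/
def MNCont {P : Type u} [PartialOrder P] (M N : Set (Set P)) : Prop :=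
  ∀ x y : P,
    (∃ A S : Set P, A ∈ M ∧ S ∈ N ∧ A ⊆ {w | wbMN M N w x} ∧
      S ⊆ {w | triMN M N x w} ∧ IsLUB A x ∧ IsGLB S x) ∧
    ({w | wbMN M N x w} ∩ {w | triMN M N w y}) ∈ mnTop M N

/-- A net 𝓜𝓝-converges to at most one element. -/
theorem stmt_8 {P : Type u} [PartialOrder P] (M N : Set (Set P))
    (hM : MinSel M) (hN : MinSel N)
    {I : Type u} (r : I → I → Prop) (f : I → P) (hr : IsDirNet r)
    (x y : P) (hx : MNConv M N r f x) (hy : MNConv M N r f y) : x = y := by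
  obtain ⟨A, S, hAM, hSN, hAx, hSx, hAS⟩ := hx
  obtain ⟨B, T, hBM, hTN, hBy, hTy, hBT⟩ := hy
  have hAne : A.Nonempty := Set.nonempty_iff_ne_empty.2 (fun h => hM.1 (h ▸ hAM))
  have hBne : B.Nonempty := Set.nonempty_iff_ne_empty.2 (fun h => hM.1 (h ▸ hBM))
  have hSne : S.Nonempty := Set.nonempty_iff_ne_empty.2 (fun h => hN.1 (h ▸ hSN))
  have hTne : T.Nonempty := Set.nonempty_iff_ne_empty.2 (fun h => hN.1 (h ▸ hTN))
  have key : ∀ a ∈ A, ∀ s ∈ S, ∀ b ∈ B, ∀ t ∈ T, a ≤ t ∧ b ≤ s := by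
    intro a ha s hs b hb t ht
    obtain ⟨i₀, h₀⟩ := hAS a ha s hs
    obtain ⟨j₀, h₁⟩ := hBT b hb t ht
    obtain ⟨k, hk₁, hk₂⟩ := hr.directed i₀ j₀
    obtain ⟨ha', hs'⟩ := h₀ k hk₁
    obtain ⟨hb', ht'⟩ := h₁ k hk₂
    exact ⟨ha'.trans ht', hb'.trans hs'⟩
  have hxy : x ≤ y := by
    obtain ⟨a, ha⟩ := hAne
    obtain ⟨s, hs⟩ := hSne
    refine hTy.2 (fun t ht => hAx.2 (fun a' ha' => ?_))
    exact (key a' ha' s hs (hBne.choose) hBne.choose_spec t ht).1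
  have hyx : y ≤ x := by
    refine hSx.2 (fun s hs => hBy.2 (fun b hb => ?_))
    exact (key hAne.choose hAne.choose_spec s hs b hb hTne.choose hTne.choose_spec).2
  exact le_antisymm hxy hyx
end

section
/- Let P be a poset, 𝓜, 𝓝 minimal subset selections on P, A ∈ 𝓜⁺ and S ∈ 𝓝⁻ with sup A = inf S =: x. Define I_{AS} = {(u, ub(B) ∩ lb(T)) : B a nonempty finite subset of A, T a nonempty finite subset of S, u ∈ ub(B) ∩ lb(T)}, preordered by (u₁, ub(B₁) ∩ lb(T₁)) ≤ (u₂, ub(B₂) ∩ lb(T₂)) iff ub(B₁) ∩ lb(T₁) ⊇ ub(B₂) ∩ lb(T₂), and define the net x : I_{AS} → P by x_{(u, ub(B) ∩ lb(T))} = u. Then I_{AS} is a nonempty directed preordered set and this net 𝓜𝓝-converges to x. -/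
universe u

/-- The canonical net on `I_{AS}` 𝓜𝓝-converges to `x = sup A = inf S`. -/
theorem stmt_9 {P : Type u} [PartialOrder P] (M N : Set (Set P))
    (hM : MinSel M) (hN : MinSel N)
    (A S : Set P) (hA : A ∈ M) (hS : S ∈ N) (x : P)
    (hsup : IsLUB A x) (hinf : IsGLB S x) :
    let IAS := {p : P × Set P //
      ∃ B T : Set P, B.Nonempty ∧ B.Finite ∧ B ⊆ A ∧ T.Nonempty ∧ T.Finite ∧ T ⊆ S ∧
        p.2 = upperBounds B ∩ lowerBounds T ∧ p.1 ∈ p.2}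
    let r : IAS → IAS → Prop := fun p q => q.1.2 ⊆ p.1.2
    let f : IAS → P := fun p => p.1.1
    IsDirNet r ∧ MNConv M N r f x := by
  intro IAS r f
  obtain ⟨a₀, ha₀⟩ : A.Nonempty := by
    rcases Set.eq_empty_or_nonempty A with h | h
    · exact absurd (h ▸ hA) hM.1
    · exact h
  obtain ⟨s₀, hs₀⟩ : S.Nonempty := by
    rcases Set.eq_empty_or_nonempty S with h | h
    · exact absurd (h ▸ hS) hN.1
    · exact h
  have hx : ∀ B T : Set P, B ⊆ A → T ⊆ S →
      x ∈ upperBounds B ∩ lowerBounds T := by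
    intro B T hB hT
    exact ⟨fun b hb => hsup.1 (hB hb), fun t ht => hinf.1 (hT ht)⟩
  constructor
  · refine ⟨fun i => Set.Subset.rfl, fun h1 h2 => h2.trans h1, ?_, ?_⟩
    · exact ⟨⟨(x, upperBounds {a₀} ∩ lowerBounds {s₀}),
        {a₀}, {s₀}, ⟨a₀, rfl⟩, Set.finite_singleton _, by simpa,
        ⟨s₀, rfl⟩, Set.finite_singleton _, by simpa, rfl,
        hx _ _ (by simpa) (by simpa)⟩⟩
    · rintro ⟨⟨u₁, E₁⟩, B₁, T₁, hB₁n, hB₁f, hB₁, hT₁n, hT₁f, hT₁, hE₁, hu₁⟩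
        ⟨⟨u₂, E₂⟩, B₂, T₂, hB₂n, hB₂f, hB₂, hT₂n, hT₂f, hT₂, hE₂, hu₂⟩
      refine ⟨⟨(x, upperBounds (B₁ ∪ B₂) ∩ lowerBounds (T₁ ∪ T₂)),
        B₁ ∪ B₂, T₁ ∪ T₂, hB₁n.mono Set.subset_union_left,
        hB₁f.union hB₂f, Set.union_subset hB₁ hB₂,
        hT₁n.mono Set.subset_union_left, hT₁f.union hT₂f,
        Set.union_subset hT₁ hT₂, rfl,
        hx _ _ (Set.union_subset hB₁ hB₂) (Set.union_subset hT₁ hT₂)⟩, ?_, ?_⟩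
      · exact Set.Subset.trans (Set.inter_subset_inter
          (upperBounds_mono_set Set.subset_union_left)
          (lowerBounds_mono_set Set.subset_union_left)) hE₁.symm.subset
      · exact Set.Subset.trans (Set.inter_subset_inter
          (upperBounds_mono_set Set.subset_union_right)
          (lowerBounds_mono_set Set.subset_union_right)) hE₂.symm.subset
  · refine ⟨A, S, hA, hS, hsup, hinf, ?_⟩
    intro a ha s hs
    refine ⟨⟨(x, upperBounds {a} ∩ lowerBounds {s}),
      {a}, {s}, ⟨a, rfl⟩, Set.finite_singleton _, by simpa,
      ⟨s, rfl⟩, Set.finite_singleton _, by simpa, rfl,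
      hx _ _ (by simpa) (by simpa)⟩, ?_⟩
    intro i hri
    have h := hri i.2.choose_spec.choose_spec.2.2.2.2.2.2.2
    exact ⟨h.1 (Set.mem_singleton a), h.2 (Set.mem_singleton s)⟩
end

section
/- Let P be a poset, 𝓜, 𝓝 minimal subset selections on P, and τ_𝓜𝓝 the topology induced by the 𝓜𝓝-convergence structure in P. Then V ∈ τ_𝓜𝓝 if and only if for every A ∈ 𝓜⁺ and S ∈ 𝓝⁻ with sup A = inf S ∈ V, there exist nonempty finite subsets B of A and T of S such that ub(B) ∩ lb(T) ⊆ V. -/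
universe u

lemma dirnet_finset {I : Type u} {r : I → I → Prop} (h : IsDirNet r)
    (t : Finset I) : ∃ j, ∀ i ∈ t, r i j := by
  classical
  induction t using Finset.induction_on with
  | empty => exact h.nonempty.elim fun j => ⟨j, fun i hi => absurd hi (Finset.notMem_empty i)⟩
  | @insert a t ha ih =>
    obtain ⟨j, hj⟩ := ih
    obtain ⟨k, hak, hjk⟩ := h.directed a j
    refine ⟨k, fun i hi => ?_⟩
    rcases Finset.mem_insert.1 hi with h' | h'
    · exact h' ▸ hak
    · exact h.trans (hj i h') hjk

lemma dirnet_finite {I : Type u} {r : I → I → Prop} (h : IsDirNet r)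
    (s : Set I) (hs : s.Finite) : ∃ j, ∀ i ∈ s, r i j := by
  obtain ⟨j, hj⟩ := dirnet_finset h hs.toFinset
  exact ⟨j, fun i hi => hj i (hs.mem_toFinset.2 hi)⟩

/-- Order-theoretic characterisation of the opens of `τ_𝓜𝓝`. -/
theorem stmt_10 {P : Type u} [PartialOrder P] (M N : Set (Set P))
    (hM : MinSel M) (hN : MinSel N) (V : Set P) :
    V ∈ mnTop M N ↔
      ∀ (A S : Set P) (x : P), A ∈ M → S ∈ N → IsLUB A x → IsGLB S x → x ∈ V →
        ∃ B T : Set P, B.Nonempty ∧ B.Finite ∧ B ⊆ A ∧ T.Nonempty ∧ T.Finite ∧ T ⊆ S ∧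
          upperBounds B ∩ lowerBounds T ⊆ V := by
  constructor
  · -- open → condition; contrapositive via the net of counterexample points
    intro hV A S x hA hS hlub hglb hxV
    by_contra hcon
    push_neg at hcon
    have hAne : A.Nonempty := Set.nonempty_iff_ne_empty.2 (fun h => hM.1 (h ▸ hA))
    have hSne : S.Nonempty := Set.nonempty_iff_ne_empty.2 (fun h => hN.1 (h ▸ hS))
    -- For every admissible (B,T) there is a bad point
    have H : ∀ B T : Set P, B.Nonempty → B.Finite → B ⊆ A → T.Nonempty → T.Finite → T ⊆ S →
        ∃ p, p ∈ upperBounds B ∩ lowerBounds T ∧ p ∉ V := by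
      intro B T h1 h2 h3 h4 h5 h6
      have := hcon B T h1 h2 h3 h4 h5 h6
      rw [Set.not_subset] at this
      obtain ⟨p, hp1, hp2⟩ := this
      exact ⟨p, hp1, hp2⟩
    let I : Type u := {q : Set P × Set P × P //
      q.1.Nonempty ∧ q.1.Finite ∧ q.1 ⊆ A ∧ q.2.1.Nonempty ∧ q.2.1.Finite ∧ q.2.1 ⊆ S ∧
      q.2.2 ∈ upperBounds q.1 ∩ lowerBounds q.2.1 ∧ q.2.2 ∉ V}
    let r : I → I → Prop := fun q q' => q.1.1 ⊆ q'.1.1 ∧ q.1.2.1 ⊆ q'.1.2.1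
    have hne : Nonempty I := by
      obtain ⟨a, ha⟩ := hAne
      obtain ⟨s, hs⟩ := hSne
      obtain ⟨p, hp, hpV⟩ := H {a} {s} ⟨a, rfl⟩ (Set.finite_singleton a)
        (Set.singleton_subset_iff.2 ha) ⟨s, rfl⟩ (Set.finite_singleton s)
        (Set.singleton_subset_iff.2 hs)
      exact ⟨⟨(({a} : Set P), ({s} : Set P), p), ⟨a, rfl⟩, Set.finite_singleton a,
        Set.singleton_subset_iff.2 ha, ⟨s, rfl⟩, Set.finite_singleton s,
        Set.singleton_subset_iff.2 hs, hp, hpV⟩⟩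
    have hdir : IsDirNet r := by
      refine ⟨fun i => ⟨subset_rfl, subset_rfl⟩,
        fun h1 h2 => ⟨h1.1.trans h2.1, h1.2.trans h2.2⟩, hne, ?_⟩
      intro q q'
      obtain ⟨hB1, hB2, hB3, hT1, hT2, hT3, _, _⟩ := q.2
      obtain ⟨hB1', hB2', hB3', hT1', hT2', hT3', _, _⟩ := q'.2
      obtain ⟨p, hp, hpV⟩ := H (q.1.1 ∪ q'.1.1) (q.1.2.1 ∪ q'.1.2.1)
        (hB1.mono Set.subset_union_left) (hB2.union hB2') (Set.union_subset hB3 hB3')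
        (hT1.mono Set.subset_union_left) (hT2.union hT2') (Set.union_subset hT3 hT3')
      exact ⟨⟨(q.1.1 ∪ q'.1.1, q.1.2.1 ∪ q'.1.2.1, p),
        hB1.mono Set.subset_union_left, hB2.union hB2', Set.union_subset hB3 hB3',
        hT1.mono Set.subset_union_left, hT2.union hT2', Set.union_subset hT3 hT3', hp, hpV⟩,
        ⟨Set.subset_union_left, Set.subset_union_left⟩,
        ⟨Set.subset_union_right, Set.subset_union_right⟩⟩
    let f : I → P := fun q => q.1.2.2
    have hconv : MNConv M N r f x := by
      refine ⟨A, S, hA, hS, hlub, hglb, ?_⟩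
      intro a ha s hs
      obtain ⟨p, hp, hpV⟩ := H {a} {s} ⟨a, rfl⟩ (Set.finite_singleton a)
        (Set.singleton_subset_iff.2 ha) ⟨s, rfl⟩ (Set.finite_singleton s)
        (Set.singleton_subset_iff.2 hs)
      refine ⟨⟨(({a} : Set P), ({s} : Set P), p), ⟨a, rfl⟩, Set.finite_singleton a,
        Set.singleton_subset_iff.2 ha, ⟨s, rfl⟩, Set.finite_singleton s,
        Set.singleton_subset_iff.2 hs, hp, hpV⟩, ?_⟩
      intro i hi
      exact ⟨i.2.2.2.2.2.2.2.1.1 (hi.1 rfl), i.2.2.2.2.2.2.2.1.2 (hi.2 rfl)⟩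
    obtain ⟨i₀, hi₀⟩ := hV I r f x hdir hconv hxV
    exact i₀.2.2.2.2.2.2.2.2 (hi₀ i₀ (hdir.refl i₀))
  · -- condition → open
    rintro h I r f x hr ⟨A, S, hA, hS, hlub, hglb, hev⟩ hxV
    obtain ⟨B, T, hB1, hB2, hB3, hT1, hT2, hT3, hsub⟩ := h A S x hA hS hlub hglb hxV
    have hchoice : ∀ p : P × P, ∃ i₀ : I, p.1 ∈ B → p.2 ∈ T →
        ∀ i, r i₀ i → p.1 ≤ f i ∧ f i ≤ p.2 := by
      intro p
      by_cases hp : p.1 ∈ B ∧ p.2 ∈ T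
      · obtain ⟨i₀, hi₀⟩ := hev p.1 (hB3 hp.1) p.2 (hT3 hp.2)
        exact ⟨i₀, fun _ _ => hi₀⟩
      · exact hr.nonempty.elim fun i => ⟨i, fun h1 h2 => absurd ⟨h1, h2⟩ hp⟩
    choose g hg using hchoice
    obtain ⟨j, hj⟩ := dirnet_finite hr (g '' (B ×ˢ T)) ((hB2.prod hT2).image g)
    refine ⟨j, fun i hji => hsub ⟨?_, ?_⟩⟩
    · intro a ha
      obtain ⟨s, hs⟩ := hT1
      have hr' : r (g (a, s)) i :=
        hr.trans (hj _ ⟨(a, s), ⟨ha, hs⟩, rfl⟩) hji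
      exact (hg (a, s) ha hs i hr').1
    · intro s hs
      obtain ⟨a, ha⟩ := hB1
      have hr' : r (g (a, s)) i :=
        hr.trans (hj _ ⟨(a, s), ⟨ha, hs⟩, rfl⟩) hji
      exact (hg (a, s) ha hs i hr').2
end

section
/- Let P be a poset, 𝓜, 𝓝 minimal subset selections on P, and x, y, z ∈ P. Then (x ≪_𝓜𝓝 y and y ◁_𝓜𝓝 z) if and only if for every net (x_i)_{i∈I} in P, if (x_i) 𝓜𝓝-converges to y then x_i ∈ ↑x ∩ ↓z eventually. -/
universe u

/-
`x ≪_𝓜𝓝 y` and `y ◁_𝓜𝓝 z` say that `↑x`, resp. `↓z`, contains `ub B ∩ lb T` for finite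
nonempty parts `B`, `T` of any `𝓜`-set `A` and `𝓝`-set `S` representing `y`. A net converging
to `y` eventually lies above every finite part of `A` and below every finite part of `S`, hence
in such a set. Conversely, if some pair `A, S` admits no such `B, T`, choose for each pair of
finite nonempty parts `B ⊆ A`, `T ⊆ S` a point of `ub B ∩ lb T` outside the set; indexed by
these pairs, the chosen points form a net that `𝓜𝓝`-converges to `y` and is never in the set.
-/

def NetEventually {I : Type u} (r : I → I → Prop) (p : I → Prop) : Prop :=
  ∃ i₀, ∀ i, r i₀ i → p i

lemma NetEventually.mono {I : Type u} {r : I → I → Prop} {p q : I → Prop}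
    (hp : NetEventually r p) (hpq : ∀ i, p i → q i) : NetEventually r q :=
  let ⟨i₀, hi₀⟩ := hp
  ⟨i₀, fun i hi => hpq i (hi₀ i hi)⟩

namespace IsDirNet

variable {I : Type u} {r : I → I → Prop}

lemma eventually_and (hr : IsDirNet r) {p q : I → Prop}
    (hp : NetEventually r p) (hq : NetEventually r q) : NetEventually r fun i => p i ∧ q i := by
  obtain ⟨i, hi⟩ := hp
  obtain ⟨j, hj⟩ := hq
  obtain ⟨k, hik, hjk⟩ := hr.directed i j
  exact ⟨k, fun l hkl => ⟨hi l (hr.trans hik hkl), hj l (hr.trans hjk hkl)⟩⟩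

lemma eventually_forall_mem (hr : IsDirNet r) {α : Type*} {s : Set α} (hs : s.Finite)
    {p : α → I → Prop} (h : ∀ a ∈ s, NetEventually r (p a)) :
    NetEventually r fun i => ∀ a ∈ s, p a i := by
  induction s, hs using Set.Finite.induction_on with
  | empty => exact ⟨hr.nonempty.some, fun _ _ a ha => absurd ha (Set.notMem_empty a)⟩
  | @insert a s _ _ ih =>
    refine (hr.eventually_and (h a (Set.mem_insert a s))
      (ih fun b hb => h b (Set.mem_insert_of_mem a hb))).mono ?_
    rintro i ⟨hai, hsi⟩ b (rfl | hb)
    exacts [hai, hsi b hb]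

end IsDirNet

abbrev FinitePartPair {P : Type u} (A S : Set P) : Type u :=
  {q : Finset P × Finset P // q.1.Nonempty ∧ ↑q.1 ⊆ A ∧ q.2.Nonempty ∧ ↑q.2 ⊆ S}

lemma isDirNet_finitePartPair {P : Type u} {A S : Set P} (hA : A.Nonempty) (hS : S.Nonempty) :
    IsDirNet fun p q : FinitePartPair A S => p.1 ≤ q.1 := by
  classical
  obtain ⟨a, ha⟩ := hA
  obtain ⟨s, hs⟩ := hS
  refine ⟨fun _ => le_rfl, le_trans, ⟨⟨({a}, {s}), by simp [ha, hs]⟩⟩, fun p q => ?_⟩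
  obtain ⟨⟨B, T⟩, hB, hBA, hT, hTS⟩ := p
  obtain ⟨⟨B', T'⟩, -, hB'A, -, hT'S⟩ := q
  refine ⟨⟨(B ∪ B', T ∪ T'),
      hB.mono Finset.subset_union_left, ?_, hT.mono Finset.subset_union_left, ?_⟩,
    ⟨Finset.subset_union_left, Finset.subset_union_left⟩,
    ⟨Finset.subset_union_right, Finset.subset_union_right⟩⟩
  · simpa only [Finset.coe_union] using Set.union_subset hBA hB'A
  · simpa only [Finset.coe_union] using Set.union_subset hTS hT'S

section Neighbourhood

variable {P : Type u} [PartialOrder P] (M N : Set (Set P))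

def IsMNNhd (U : Set P) (y : P) : Prop :=
  ∀ A S : Set P, A ∈ M → S ∈ N → IsLUB A y → IsGLB S y →
    ∃ B T : Set P, B.Nonempty ∧ B.Finite ∧ B ⊆ A ∧ T.Nonempty ∧ T.Finite ∧ T ⊆ S ∧
      upperBounds B ∩ lowerBounds T ⊆ U

lemma wbMN_iff_isMNNhd {x y : P} : wbMN M N x y ↔ IsMNNhd M N (Set.Ici x) y := Iff.rfl

lemma triMN_iff_isMNNhd {y z : P} : triMN M N y z ↔ IsMNNhd M N (Set.Iic z) y := Iff.rfl

variable {M N}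

lemma IsDirNet.eventually_mem_upperBounds_inter_lowerBounds {I : Type u} {r : I → I → Prop}
    (hr : IsDirNet r) {f : I → P} {A S B T : Set P}
    (hconv : ∀ a ∈ A, ∀ s ∈ S, NetEventually r fun i => a ≤ f i ∧ f i ≤ s)
    (hB : B.Nonempty) (hBfin : B.Finite) (hBA : B ⊆ A)
    (hT : T.Nonempty) (hTfin : T.Finite) (hTS : T ⊆ S) :
    NetEventually r fun i => f i ∈ upperBounds B ∩ lowerBounds T := by
  have hprod : NetEventually r fun i => ∀ q ∈ B ×ˢ T, q.1 ≤ f i ∧ f i ≤ q.2 :=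
    hr.eventually_forall_mem (hBfin.prod hTfin) fun q hq => hconv q.1 (hBA hq.1) q.2 (hTS hq.2)
  obtain ⟨t₀, ht₀⟩ := hT
  obtain ⟨b₀, hb₀⟩ := hB
  refine hprod.mono fun i hi => ⟨fun b hb => ?_, fun t ht => ?_⟩
  exacts [(hi (b, t₀) ⟨hb, ht₀⟩).1, (hi (b₀, t) ⟨hb₀, ht⟩).2]

lemma MNConv.eventually_mem {I : Type u} {r : I → I → Prop} {f : I → P} {U : Set P} {y : P}
    (hr : IsDirNet r) (hf : MNConv M N r f y) (hU : IsMNNhd M N U y) :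
    NetEventually r fun i => f i ∈ U := by
  obtain ⟨A, S, hA, hS, hAy, hSy, hconv⟩ := hf
  obtain ⟨B, T, hB, hBfin, hBA, hT, hTfin, hTS, hBT⟩ := hU A S hA hS hAy hSy
  exact (hr.eventually_mem_upperBounds_inter_lowerBounds hconv hB hBfin hBA hT hTfin hTS).mono
    fun _ hi => hBT hi

lemma isMNNhd_of_forall_eventually_mem (hM : (∅ : Set P) ∉ M) (hN : (∅ : Set P) ∉ N)
    {U : Set P} {y : P}
    (h : ∀ (I : Type u) (r : I → I → Prop) (f : I → P), IsDirNet r → MNConv M N r f y →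
      NetEventually r fun i => f i ∈ U) :
    IsMNNhd M N U y := by
  intro A S hA hS hAy hSy
  by_contra! hescape
  have hpoint : ∀ q : FinitePartPair A S,
      ∃ p ∈ upperBounds (q.1.1 : Set P) ∩ lowerBounds (q.1.2 : Set P), p ∉ U := fun q =>
    Set.not_subset.mp (hescape _ _ q.2.1 (Finset.finite_toSet _) q.2.2.1 q.2.2.2.1
      (Finset.finite_toSet _) q.2.2.2.2)
  choose g hg hgU using hpoint
  have hr := isDirNet_finitePartPair
    (Set.nonempty_iff_ne_empty.mpr (ne_of_mem_of_not_mem hA hM))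
    (Set.nonempty_iff_ne_empty.mpr (ne_of_mem_of_not_mem hS hN))
  have hconv : MNConv M N (fun p q : FinitePartPair A S => p.1 ≤ q.1) g y := by
    refine ⟨A, S, hA, hS, hAy, hSy, fun a ha s hs => ⟨⟨({a}, {s}), by simp [ha, hs]⟩, ?_⟩⟩
    rintro q ⟨haq, hsq⟩
    exact ⟨(hg q).1 (haq (Finset.mem_singleton_self a)),
      (hg q).2 (hsq (Finset.mem_singleton_self s))⟩
  obtain ⟨q, hq⟩ := h _ _ g hr hconv
  exact hgU q (hq q (hr.refl q))

end Neighbourhood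

/-- Net characterisation of the conjunction `x ≪_𝓜𝓝 y` and `y ◁_𝓜𝓝 z`. -/
theorem stmt_13 {P : Type u} [PartialOrder P] (M N : Set (Set P))
    (hM : MinSel M) (hN : MinSel N) (x y z : P) :
    (wbMN M N x y ∧ triMN M N y z) ↔
      ∀ (I : Type u) (r : I → I → Prop) (f : I → P), IsDirNet r →
        MNConv M N r f y → ∃ i₀, ∀ i, r i₀ i → x ≤ f i ∧ f i ≤ z := by
  rw [wbMN_iff_isMNNhd, triMN_iff_isMNNhd]
  constructor
  · rintro ⟨hx, hz⟩ I r f hr hf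
    exact hr.eventually_and (hf.eventually_mem hr hx) (hf.eventually_mem hr hz)
  · intro h
    constructor <;> refine isMNNhd_of_forall_eventually_mem hM.1 hN.1 fun I r f hr hf => ?_
    exacts [NetEventually.mono (h I r f hr hf) fun _ hi => hi.1,
      NetEventually.mono (h I r f hr hf) fun _ hi => hi.2]
end

section
/- Let P be a poset and 𝓜, 𝓝 minimal subset selections on P. If P is 𝓜𝓝-continuous, then the 𝓜𝓝-convergence structure in P is topological; that is, every net that converges to a point x in the topology τ_𝓜𝓝 also 𝓜𝓝-converges to x. -/
universe u

lemma wbMN_le {P : Type u} [PartialOrder P] {M N : Set (Set P)}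
    (hM : MinSel M) (hN : MinSel N) {a w : P} (h : wbMN M N a w) : a ≤ w := by
  obtain ⟨B, T, hBne, -, hBsub, hTne, -, hTsub, hsub⟩ :=
    h {w} {w} (hM.2 w) (hN.2 w) isLUB_singleton isGLB_singleton
  exact hsub ⟨fun b hb => le_of_eq (hBsub hb), fun t ht => le_of_eq (hTsub ht).symm⟩

lemma triMN_le {P : Type u} [PartialOrder P] {M N : Set (Set P)}
    (hM : MinSel M) (hN : MinSel N) {w s : P} (h : triMN M N w s) : w ≤ s := by
  obtain ⟨B, T, hBne, -, hBsub, hTne, -, hTsub, hsub⟩ :=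
    h {w} {w} (hM.2 w) (hN.2 w) isLUB_singleton isGLB_singleton
  exact hsub ⟨fun b hb => le_of_eq (hBsub hb), fun t ht => le_of_eq (hTsub ht).symm⟩

/-- If `P` is 𝓜𝓝-continuous, then the 𝓜𝓝-convergence structure is topological. -/
theorem stmt_15 {P : Type u} [PartialOrder P] (M N : Set (Set P))
    (hM : MinSel M) (hN : MinSel N) (hcont : MNCont M N) : MNTopological M N := by
  intro I r f x hdir hconv
  obtain ⟨⟨A, S, hAM, hSN, hAsub, hSsub, hlub, hglb⟩, -⟩ := hcont x x
  refine ⟨A, S, hAM, hSN, hlub, hglb, fun a ha s hs => ?_⟩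
  have hopen : ({w | wbMN M N a w} ∩ {w | triMN M N w s}) ∈ mnTop M N :=
    (hcont a s).2
  have hx : x ∈ ({w | wbMN M N a w} ∩ {w | triMN M N w s}) :=
    ⟨hAsub ha, hSsub hs⟩
  obtain ⟨i₀, hi₀⟩ := hconv _ hopen hx
  exact ⟨i₀, fun i hi => ⟨wbMN_le hM hN (hi₀ i hi).1, triMN_le hM hN (hi₀ i hi).2⟩⟩
end

section
/- Let P be a poset. Then P is R*-doubly continuous if and only if P is (Dir Filt)-continuous, i.e., P is 𝓜𝓝-continuous for 𝓜 the collection of all directed subsets of P and 𝓝 the collection of all filtered subsets of P. -/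
/-!
For directed `D` and filtered `F` with `sup D = x = inf F`, every finite part of `D` (of `F`) is
bounded by a single element of `D` (of `F`). So `w ≪ x` yields `d ∈ D`, `e ∈ F` with
`[d, e] ⊆ ↑w`, dually for `x ◁ z`, and any two such intervals contain a common third one.
Since `d ≤ x ≤ e`, this gives (R1) from the approximants of (MN1), and since an order-convergent
net is eventually in every `[d, e]`, (R2) makes the sets `{p | y ≪ p ◁ z}` open. Conversely, an
open `U ∋ x` contains some `[a, s]` with `a ≪ x ◁ s`: otherwise a choice of points of
`[a, s] \ U`, indexed by the pairs `(a, s)`, is a net order-converging to `x` by (R1) that never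
meets `U`.
-/
universe u

theorem DirectedOn.exists_mem_forall_rel_of_finite {α : Type*} {r : α → α → Prop} [IsTrans α r]
    {D B : Set α} (hD : DirectedOn r D) (hDne : D.Nonempty) (hB : B.Finite) (hBD : B ⊆ D) :
    ∃ d ∈ D, ∀ b ∈ B, r b d := by
  have : Nonempty D := hDne.to_subtype
  obtain ⟨d, hd⟩ := hD.directed_val.finite_set_le (hB.preimage Subtype.val_injective.injOn)
  exact ⟨d, d.2, fun b hb => hd ⟨b, hBD hb⟩ hb⟩

section DirFilt

variable {P : Type u} [PartialOrder P]

variable (P) in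
def dirSets : Set (Set P) := {D | D.Nonempty ∧ DirectedOn (· ≤ ·) D}

variable (P) in
def filtSets : Set (Set P) := {F | F.Nonempty ∧ DirectedOn (· ≥ ·) F}

theorem exists_Icc_subset_of_finite {D F B T : Set P} (hD : D ∈ dirSets P) (hF : F ∈ filtSets P)
    (hB : B.Finite) (hBD : B ⊆ D) (hT : T.Finite) (hTF : T ⊆ F) :
    ∃ d ∈ D, ∃ e ∈ F, Set.Icc d e ⊆ upperBounds B ∩ lowerBounds T := by
  obtain ⟨d, hdD, hd⟩ := hD.2.exists_mem_forall_rel_of_finite hD.1 hB hBD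
  obtain ⟨e, heF, he⟩ := hF.2.exists_mem_forall_rel_of_finite hF.1 hT hTF
  exact ⟨d, hdD, e, heF, fun p hp => ⟨fun b hb => (hd b hb).trans hp.1,
    fun t ht => hp.2.trans (he t ht)⟩⟩

theorem exists_Icc_subset_inter {D F X Y : Set P} (hD : D ∈ dirSets P) (hF : F ∈ filtSets P)
    (hX : ∃ d ∈ D, ∃ e ∈ F, Set.Icc d e ⊆ X) (hY : ∃ d ∈ D, ∃ e ∈ F, Set.Icc d e ⊆ Y) :
    ∃ d ∈ D, ∃ e ∈ F, Set.Icc d e ⊆ X ∩ Y := by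
  obtain ⟨d₁, hd₁, e₁, he₁, hX⟩ := hX
  obtain ⟨d₂, hd₂, e₂, he₂, hY⟩ := hY
  obtain ⟨d, hd, hd₁d, hd₂d⟩ := hD.2 d₁ hd₁ d₂ hd₂
  obtain ⟨e, he, he₁e, he₂e⟩ := hF.2 e₁ he₁ e₂ he₂
  exact ⟨d, hd, e, he, Set.subset_inter
    ((Set.Icc_subset_Icc hd₁d he₁e).trans hX) ((Set.Icc_subset_Icc hd₂d he₂e).trans hY)⟩

theorem wbMN.exists_Icc_subset {w x : P} {D F : Set P} (h : wbMN (dirSets P) (filtSets P) w x)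
    (hD : D ∈ dirSets P) (hF : F ∈ filtSets P) (hDx : IsLUB D x) (hFx : IsGLB F x) :
    ∃ d ∈ D, ∃ e ∈ F, Set.Icc d e ⊆ Set.Ici w := by
  obtain ⟨B, T, -, hB, hBD, -, hT, hTF, hBT⟩ := h D F hD hF hDx hFx
  obtain ⟨d, hd, e, he, hde⟩ := exists_Icc_subset_of_finite hD hF hB hBD hT hTF
  exact ⟨d, hd, e, he, hde.trans hBT⟩

theorem triMN.exists_Icc_subset {x z : P} {D F : Set P} (h : triMN (dirSets P) (filtSets P) x z)
    (hD : D ∈ dirSets P) (hF : F ∈ filtSets P) (hDx : IsLUB D x) (hFx : IsGLB F x) :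
    ∃ d ∈ D, ∃ e ∈ F, Set.Icc d e ⊆ Set.Iic z := by
  obtain ⟨B, T, -, hB, hBD, -, hT, hTF, hBT⟩ := h D F hD hF hDx hFx
  obtain ⟨d, hd, e, he, hde⟩ := exists_Icc_subset_of_finite hD hF hB hBD hT hTF
  exact ⟨d, hd, e, he, hde.trans hBT⟩


theorem wbMN.le {w x : P} {D F : Set P} (h : wbMN (dirSets P) (filtSets P) w x)
    (hD : D ∈ dirSets P) (hF : F ∈ filtSets P) (hDx : IsLUB D x) (hFx : IsGLB F x) : w ≤ x := by
  obtain ⟨d, hd, e, he, hde⟩ := h.exists_Icc_subset hD hF hDx hFx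
  exact hde ⟨hDx.1 hd, hFx.1 he⟩

theorem triMN.le {x z : P} {D F : Set P} (h : triMN (dirSets P) (filtSets P) x z)
    (hD : D ∈ dirSets P) (hF : F ∈ filtSets P) (hDx : IsLUB D x) (hFx : IsGLB F x) : x ≤ z := by
  obtain ⟨d, hd, e, he, hde⟩ := h.exists_Icc_subset hD hF hDx hFx
  exact hde ⟨hDx.1 hd, hFx.1 he⟩

theorem mem_mnTop_of_forall_exists_Icc_subset {U : Set P}
    (hU : ∀ p ∈ U, ∃ a s, wbMN (dirSets P) (filtSets P) a p ∧ triMN (dirSets P) (filtSets P) p s ∧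
      Set.Icc a s ⊆ U) :
    U ∈ mnTop (dirSets P) (filtSets P) := by
  rintro I r f p - ⟨D, F, hD, hF, hDp, hFp, hev⟩ hpU
  obtain ⟨a, s, ha, hs, has⟩ := hU p hpU
  obtain ⟨d, hd, e, he, hde⟩ := exists_Icc_subset_inter hD hF
    (ha.exists_Icc_subset hD hF hDp hFp) (hs.exists_Icc_subset hD hF hDp hFp)
  obtain ⟨i₀, hi₀⟩ := hev d hd e he
  exact ⟨i₀, fun i hi => has (hde (hi₀ i hi))⟩

theorem exists_Icc_subset_of_mem_mnTop {U D F : Set P} {x : P}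
    (hU : U ∈ mnTop (dirSets P) (filtSets P)) (hD : D ∈ dirSets P) (hF : F ∈ filtSets P)
    (hDx : IsLUB D x) (hFx : IsGLB F x) (hxU : x ∈ U) :
    ∃ a ∈ D, ∃ s ∈ F, Set.Icc a s ⊆ U := by
  by_contra! h
  choose f hf hfU using fun q : D × F => Set.not_subset.1 (h q.1 q.1.2 q.2 q.2.2)
  let r : D × F → D × F → Prop := fun i j => i.1.1 ≤ j.1.1 ∧ j.2.1 ≤ i.2.1
  have hnet : IsDirNet r := by
    refine ⟨fun i => ⟨le_rfl, le_rfl⟩, fun hij hjk => ⟨hij.1.trans hjk.1, hjk.2.trans hij.2⟩,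
      ?_, fun i j => ?_⟩
    · have : Nonempty D := hD.1.to_subtype
      have : Nonempty F := hF.1.to_subtype
      infer_instance
    · obtain ⟨a, ha, hia, hja⟩ := hD.2 i.1 i.1.2 j.1 j.1.2
      obtain ⟨s, hs, his, hjs⟩ := hF.2 i.2 i.2.2 j.2 j.2.2
      exact ⟨(⟨a, ha⟩, ⟨s, hs⟩), ⟨hia, his⟩, ⟨hja, hjs⟩⟩
  have hconv : MNConv (dirSets P) (filtSets P) r f x :=
    ⟨D, F, hD, hF, hDx, hFx, fun a ha s hs =>
      ⟨(⟨a, ha⟩, ⟨s, hs⟩), fun i hi => ⟨hi.1.trans (hf i).1, (hf i).2.trans hi.2⟩⟩⟩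
  obtain ⟨i₀, hi₀⟩ := hU _ r f x hnet hconv hxU
  exact hfU i₀ (hi₀ i₀ (hnet.refl i₀))

theorem MNCont.wbMN_nonempty_directedOn_isLUB (h : MNCont (dirSets P) (filtSets P)) (x : P) :
    {w | wbMN (dirSets P) (filtSets P) w x}.Nonempty ∧
      DirectedOn (· ≤ ·) {w | wbMN (dirSets P) (filtSets P) w x} ∧
      IsLUB {w | wbMN (dirSets P) (filtSets P) w x} x := by
  obtain ⟨⟨D, F, hD, hF, hDwb, -, hDx, hFx⟩, -⟩ := h x x
  refine ⟨hD.1.mono hDwb, fun p hp q hq => ?_,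
    ⟨fun w hw => hw.le hD hF hDx hFx, fun u hu => hDx.2 fun a ha => hu (hDwb ha)⟩⟩
  obtain ⟨d, hd, e, he, hde⟩ := exists_Icc_subset_inter hD hF
    (hp.exists_Icc_subset hD hF hDx hFx) (hq.exists_Icc_subset hD hF hDx hFx)
  exact ⟨d, hDwb hd, hde ⟨le_rfl, (hDx.1 hd).trans (hFx.1 he)⟩⟩

theorem MNCont.triMN_nonempty_directedOn_isGLB (h : MNCont (dirSets P) (filtSets P)) (x : P) :
    {w | triMN (dirSets P) (filtSets P) x w}.Nonempty ∧
      DirectedOn (· ≥ ·) {w | triMN (dirSets P) (filtSets P) x w} ∧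
      IsGLB {w | triMN (dirSets P) (filtSets P) x w} x := by
  obtain ⟨⟨D, F, hD, hF, -, hFtri, hDx, hFx⟩, -⟩ := h x x
  refine ⟨hF.1.mono hFtri, fun p hp q hq => ?_,
    ⟨fun w hw => hw.le hD hF hDx hFx, fun u hu => hFx.2 fun s hs => hu (hFtri hs)⟩⟩
  obtain ⟨d, hd, e, he, hde⟩ := exists_Icc_subset_inter hD hF
    (hp.exists_Icc_subset hD hF hDx hFx) (hq.exists_Icc_subset hD hF hDx hFx)
  exact ⟨e, hFtri he, hde ⟨(hDx.1 hd).trans (hFx.1 he), le_rfl⟩⟩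

theorem MNCont.exists_Icc_subset {x y z : P} (h : MNCont (dirSets P) (filtSets P))
    (hyx : wbMN (dirSets P) (filtSets P) y x) (hxz : triMN (dirSets P) (filtSets P) x z) :
    ∃ a s, wbMN (dirSets P) (filtSets P) a x ∧ triMN (dirSets P) (filtSets P) x s ∧
      Set.Icc a s ⊆ {p | wbMN (dirSets P) (filtSets P) y p} ∩
        {p | triMN (dirSets P) (filtSets P) p z} := by
  obtain ⟨hwne, hwdir, hwlub⟩ := h.wbMN_nonempty_directedOn_isLUB x
  obtain ⟨htne, htdir, htglb⟩ := h.triMN_nonempty_directedOn_isGLB x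
  obtain ⟨a, ha, s, hs, has⟩ := exists_Icc_subset_of_mem_mnTop (h y z).2
    ⟨hwne, hwdir⟩ ⟨htne, htdir⟩ hwlub htglb ⟨hyx, hxz⟩
  exact ⟨a, s, ha, hs, has⟩

end DirFilt

/-- `P` is R*-doubly continuous iff `P` is (Dir Filt)-continuous. -/
theorem stmt_18 {P : Type u} [PartialOrder P] :
    let Dir : Set (Set P) := {D | D.Nonempty ∧ DirectedOn (· ≤ ·) D}
    let Filt : Set (Set P) := {F | F.Nonempty ∧ DirectedOn (· ≥ ·) F}
    ((∀ x : P,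
        ({w | wbMN Dir Filt w x}).Nonempty ∧
          DirectedOn (· ≤ ·) {w | wbMN Dir Filt w x} ∧
          IsLUB {w | wbMN Dir Filt w x} x ∧
        ({w | triMN Dir Filt x w}).Nonempty ∧
          DirectedOn (· ≥ ·) {w | triMN Dir Filt x w} ∧
          IsGLB {w | triMN Dir Filt x w} x) ∧
      (∀ x y z : P, wbMN Dir Filt y x → triMN Dir Filt x z →
        ∃ a s : P, wbMN Dir Filt a x ∧ triMN Dir Filt x s ∧
          Set.Ici a ∩ Set.Iic s ⊆ {p | wbMN Dir Filt y p} ∩ {p | triMN Dir Filt p z})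
      ↔ MNCont Dir Filt) := by
  intro Dir Filt
  constructor
  · rintro ⟨hR1, hR2⟩ x y
    obtain ⟨hwne, hwdir, hwlub, htne, htdir, htglb⟩ := hR1 x
    refine ⟨⟨_, _, ⟨hwne, hwdir⟩, ⟨htne, htdir⟩, subset_rfl, subset_rfl, hwlub, htglb⟩,
      mem_mnTop_of_forall_exists_Icc_subset fun p hp => ?_⟩
    obtain ⟨a, s, ha, hs, has⟩ := hR2 p x y hp.1 hp.2
    exact ⟨a, s, ha, hs, by rwa [← Set.Ici_inter_Iic]⟩
  · intro h
    refine ⟨fun x => ?_, fun x y z hyx hxz => ?_⟩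
    · obtain ⟨hwne, hwdir, hwlub⟩ := h.wbMN_nonempty_directedOn_isLUB x
      obtain ⟨htne, htdir, htglb⟩ := h.triMN_nonempty_directedOn_isGLB x
      exact ⟨hwne, hwdir, hwlub, htne, htdir, htglb⟩
    · obtain ⟨a, s, ha, hs, has⟩ := h.exists_Icc_subset hyx hxz
      exact ⟨a, s, ha, hs, by rwa [Set.Ici_inter_Iic]⟩
end
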